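/- arXiv:2411.02140 — 6 statements merged into one kernel-verified Lean document; each statement's English description precedes it below -/
import Mathlib

section
/- Let H and A be Hermitian operators on a nonzero finite-dimensional complex inner product space. Suppose the smallest eigenvalue E₀ of H is simple, let Ω be a unit eigenvector of H for E₀, and let Δ > 0 satisfy ⟨ψ, Hψ⟩ ≥ E₀ + Δ for every unit vector ψ orthogonal to Ω. Then (⟨Ω, A²Ω⟩ − ⟨Ω, AΩ⟩²) · Δ ≤ (1/2) · ‖[A,[A,H]]‖, where ‖·‖ is the operator norm and [X,Y] := XY − YX. -/
open scoped InnerProductSpace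

/-- **Variance–gap trade-off.**  Let `H` and `A` be Hermitian operators on a nonzero
finite-dimensional complex inner product space.  Suppose the smallest eigenvalue `E₀` of `H` is
simple, `Ω` is a unit eigenvector of `H` for `E₀`, and `Δ > 0` satisfies
`⟨ψ, Hψ⟩ ≥ E₀ + Δ` for every unit vector `ψ` orthogonal to `Ω`.  Then
`(⟨Ω, A²Ω⟩ − ⟨Ω, AΩ⟩²) · Δ ≤ (1/2) · ‖[A,[A,H]]‖`. -/
theorem variance_gap_tradeoff
    {E : Type*} [NormedAddCommGroup E] [InnerProductSpace ℂ E]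
    [FiniteDimensional ℂ E] [Nontrivial E]
    (H A : E →L[ℂ] E) (hH : IsSelfAdjoint H) (hA : IsSelfAdjoint A)
    (E₀ Δ : ℝ) (hΔ : 0 < Δ)
    (Ω : E) (hΩ : ‖Ω‖ = 1) (heig : H Ω = (E₀ : ℂ) • Ω)
    (hmin : ∀ ψ : E, ‖ψ‖ = 1 → E₀ ≤ (⟪ψ, H ψ⟫_ℂ).re)
    (hsimple : ∀ ψ : E, H ψ = (E₀ : ℂ) • ψ → ∃ c : ℂ, ψ = c • Ω)
    (hgap : ∀ ψ : E, ‖ψ‖ = 1 → ⟪Ω, ψ⟫_ℂ = 0 → E₀ + Δ ≤ (⟪ψ, H ψ⟫_ℂ).re) :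
    ((⟪Ω, (A * A) Ω⟫_ℂ).re - (⟪Ω, A Ω⟫_ℂ).re ^ 2) * Δ ≤
      (1 / 2) * ‖A * (A * H - H * A) - (A * H - H * A) * A‖ := by
  have hAs : ∀ x y : E, ⟪A x, y⟫_ℂ = ⟪x, A y⟫_ℂ := hA.isSymmetric
  have hHs : ∀ x y : E, ⟪H x, y⟫_ℂ = ⟪x, H y⟫_ℂ := hH.isSymmetric
  have hΩΩ : ⟪Ω, Ω⟫_ℂ = 1 := by
    rw [inner_self_eq_norm_sq_to_K, hΩ]; norm_num
  -- ⟨Ω, AΩ⟩ is real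
  have hαconj : (starRingEnd ℂ) ⟪Ω, A Ω⟫_ℂ = ⟪Ω, A Ω⟫_ℂ :=
    (inner_conj_symm (A Ω) Ω).trans (hAs Ω Ω)
  obtain ⟨r, hαr⟩ : ∃ r : ℝ, ⟪Ω, A Ω⟫_ℂ = (r : ℂ) :=
    ⟨(⟪Ω, A Ω⟫_ℂ).re, (Complex.conj_eq_iff_re.mp hαconj).symm⟩
  set φ : E := A Ω - (r : ℂ) • Ω with hφdef
  set β : ℂ := ⟪A Ω, A Ω⟫_ℂ with hβdef
  set γ : ℂ := ⟪A Ω, H (A Ω)⟫_ℂ with hγdef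
  set b : ℝ := ‖A Ω‖ ^ 2 with hbdef
  have hβ : β = ((b : ℝ) : ℂ) := by
    rw [hβdef, inner_self_eq_norm_sq_to_K, hbdef]; norm_cast
  -- γ is real
  have hγconj : (starRingEnd ℂ) γ = γ := (inner_conj_symm (H (A Ω)) (A Ω)).trans (hHs _ _)
  obtain ⟨g, hγ⟩ : ∃ g : ℝ, γ = (g : ℂ) := ⟨γ.re, (Complex.conj_eq_iff_re.mp hγconj).symm⟩
  have f1 : ⟪A Ω, Ω⟫_ℂ = (r : ℂ) := (hAs Ω Ω).trans hαr
  have f2 : ⟪Ω, H (A Ω)⟫_ℂ = (E₀ : ℂ) * (r : ℂ) := by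
    rw [← hHs, heig, inner_smul_left, Complex.conj_ofReal, hαr]
  have e1 : ⟪Ω, A (A Ω)⟫_ℂ = β := (hAs Ω (A Ω)).symm
  have e2 : ⟪Ω, A (H (A Ω))⟫_ℂ = γ := (hAs Ω (H (A Ω))).symm
  have e3 : ⟪Ω, H (A (A Ω))⟫_ℂ = (E₀ : ℂ) * β := by
    rw [← hHs, heig, inner_smul_left, Complex.conj_ofReal, e1]
  -- orthogonality of φ to Ω
  have hφΩ : ⟪Ω, φ⟫_ℂ = 0 := by
    rw [hφdef, inner_sub_right, inner_smul_right, hΩΩ, hαr]; ring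
  -- norm of φ
  have hφφ : ⟪φ, φ⟫_ℂ = β - (r : ℂ) * (r : ℂ) := by
    rw [hφdef]
    rw [inner_sub_left, inner_sub_right, inner_sub_right, inner_smul_left,
      inner_smul_right, inner_smul_left, inner_smul_right, hΩΩ, hαr, f1,
      Complex.conj_ofReal]
    ring
  have hVeq : ‖φ‖ ^ 2 = b - r ^ 2 := by
    have h2 := inner_self_eq_norm_sq_to_K (𝕜 := ℂ) (x := φ)
    rw [hφφ, hβ] at h2
    have h4 : b - r * r = ‖φ‖ ^ 2 := by
      have h5 := congrArg Complex.re h2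
      exact_mod_cast h5
    nlinarith [h4]
  -- energy of φ
  have hφHφ : ⟪φ, H φ⟫_ℂ = ((g - E₀ * r ^ 2 : ℝ) : ℂ) := by
    rw [hφdef, map_sub, map_smul, heig]
    rw [inner_sub_left, inner_sub_right, inner_sub_right, inner_smul_left,
      inner_smul_right, inner_smul_left, inner_smul_right, inner_smul_right,
      inner_smul_right, hΩΩ, f1, f2, Complex.conj_ofReal, ← hγdef, hγ]
    push_cast; ring
  -- the double commutator expectation value
  set C : E →L[ℂ] E := A * (A * H - H * A) - (A * H - H * A) * A with hCdef
  have h4 : ⟪Ω, C Ω⟫_ℂ = ((2 * E₀ * b - 2 * g : ℝ) : ℂ) := by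
    rw [hCdef]
    simp only [ContinuousLinearMap.sub_apply, ContinuousLinearMap.mul_apply, map_sub,
      heig, map_smul, inner_sub_right, inner_smul_right, e1, e2, e3]
    rw [hβ, hγ]; push_cast; ring
  have hCbound : |2 * E₀ * b - 2 * g| ≤ ‖C‖ := by
    have h5 : ‖⟪Ω, C Ω⟫_ℂ‖ ≤ ‖Ω‖ * ‖C Ω‖ := norm_inner_le_norm Ω (C Ω)
    have h6 : ‖C Ω‖ ≤ ‖C‖ * ‖Ω‖ := C.le_opNorm Ω
    have h7 : ‖⟪Ω, C Ω⟫_ℂ‖ = |2 * E₀ * b - 2 * g| := by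
      rw [h4, Complex.norm_real, Real.norm_eq_abs]
    rw [h7, hΩ, one_mul] at h5
    rw [hΩ, mul_one] at h6
    linarith
  -- rewrite the goal
  have hgoal1 : (⟪Ω, (A * A) Ω⟫_ℂ).re = b := by
    rw [ContinuousLinearMap.mul_apply, e1, hβ, Complex.ofReal_re]
  have hgoal2 : (⟪Ω, A Ω⟫_ℂ).re = r := by rw [hαr, Complex.ofReal_re]
  rw [hgoal1, hgoal2]
  -- key inequality: (b - r²) * Δ ≤ g - E₀ * b
  have hkey : (b - r ^ 2) * Δ ≤ g - E₀ * b := by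
    by_cases hφ0 : φ = 0
    · have : b - r ^ 2 = 0 := by rw [← hVeq, hφ0]; simp
      rw [this, zero_mul]
      have hb : ‖φ‖ ^ 2 = 0 := by rw [hφ0]; simp
      have : ((g - E₀ * r ^ 2 : ℝ) : ℂ) = 0 := by rw [← hφHφ, hφ0]; simp
      have hgr : g - E₀ * r ^ 2 = 0 := by exact_mod_cast this
      have hbr : b = r ^ 2 := by linarith [hVeq ▸ hb]
      have hEb : E₀ * b = E₀ * r ^ 2 := by rw [hbr]
      linarith
    · have hnφ : 0 < ‖φ‖ := norm_pos_iff.mpr hφ0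
      set ψ : E := ((‖φ‖ : ℂ))⁻¹ • φ with hψdef
      have hψ1 : ‖ψ‖ = 1 := by
        rw [hψdef, norm_smul, norm_inv, Complex.norm_real, Real.norm_eq_abs,
          abs_of_pos hnφ, inv_mul_cancel₀ hnφ.ne']
      have hψ2 : ⟪Ω, ψ⟫_ℂ = 0 := by
        rw [hψdef, inner_smul_right, hφΩ, mul_zero]
      have h8 := hgap ψ hψ1 hψ2
      have h9 : ⟪ψ, H ψ⟫_ℂ = (((‖φ‖ ^ 2)⁻¹ * (g - E₀ * r ^ 2) : ℝ) : ℂ) := by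
        rw [hψdef, map_smul, inner_smul_left, inner_smul_right, map_inv₀,
          Complex.conj_ofReal, hφHφ]
        push_cast; field_simp
      rw [h9] at h8
      simp only [Complex.ofReal_re] at h8
      have hV : 0 < b - r ^ 2 := by rw [← hVeq]; positivity
      have h10 : (E₀ + Δ) * (b - r ^ 2) ≤ g - E₀ * r ^ 2 := by
        have := mul_le_mul_of_nonneg_right h8 (le_of_lt hV)
        rw [← hVeq] at hV ⊢
        calc (E₀ + Δ) * ‖φ‖ ^ 2 ≤ (‖φ‖ ^ 2)⁻¹ * (g - E₀ * r ^ 2) * ‖φ‖ ^ 2 := by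
              rw [hVeq] at this ⊢; exact this
          _ = g - E₀ * r ^ 2 := by field_simp
      nlinarith
  have habs := abs_le.mp hCbound
  linarith [habs.1]
end

section
/- In the qudit lattice setting, let H = ∑_{Z ⊆ Λ, |Z| ≤ k} h_Z be k-local and ḡ₁-extensive (k ≥ 1), with simple smallest eigenvalue, unit ground state Ω and spectral gap Δ > 0. Let L ⊆ Λ and let A_L = ∑_{Z ⊆ L, |Z| ≤ k_A} a_Z be k_A-local and 1-extensive (k_A ≥ 1) with every a_Z supported in L. Then (⟨Ω, A_L²Ω⟩ − ⟨Ω, A_LΩ⟩²) · Δ ≤ γ² ḡ₁ |L|, where γ := √(18 k_A² k (k + k_A)). -/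
open Matrix

namespace FullyConnected

/-- Configurations of `d`-state qudits on the site set `Λ`. -/
abbrev Config (Λ : Type*) (d : ℕ) := Λ → Fin d

/-- Operators on the total Hilbert space of the qudit lattice `Λ`, written as matrices in the
canonical product basis indexed by configurations. -/
abbrev Op (Λ : Type*) (d : ℕ) := Matrix (Config Λ d) (Config Λ d) ℂ

/-- The ℓ²→ℓ² operator norm of a square complex matrix. -/
noncomputable def opNorm {m : Type*} [Fintype m] [DecidableEq m] (M : Matrix m m ℂ) : ℝ :=
  ‖Matrix.toEuclideanCLM (𝕜 := ℂ) M‖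

variable {Λ : Type*} [Fintype Λ] [DecidableEq Λ] {d : ℕ}

/-- `O` is supported on `Z ⊆ Λ`: its matrix elements vanish between configurations differing
outside `Z`, and depend only on the restrictions of the configurations to `Z`. -/
def SupportedOn (O : Op Λ d) (Z : Set Λ) : Prop :=
  (∀ x y : Config Λ d, (∃ i ∉ Z, x i ≠ y i) → O x y = 0) ∧
  (∀ x y x' y' : Config Λ d,
    (∀ i ∉ Z, x i = y i) → (∀ i ∉ Z, x' i = y' i) →
    (∀ i ∈ Z, x i = x' i) → (∀ i ∈ Z, y i = y' i) → O x y = O x' y')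


section Aux

variable {m : Type*} [Fintype m] [DecidableEq m]

lemma opNorm_nonneg' (M : Matrix m m ℂ) : 0 ≤ opNorm M := norm_nonneg _

lemma opNorm_mul_le' (M N : Matrix m m ℂ) : opNorm (M * N) ≤ opNorm M * opNorm N := by
  unfold opNorm; rw [_root_.map_mul]; exact norm_mul_le _ _

lemma opNorm_sub_le' (M N : Matrix m m ℂ) : opNorm (M - N) ≤ opNorm M + opNorm N := by
  unfold opNorm; rw [map_sub]; exact norm_sub_le _ _

lemma opNorm_sum_le' {ι : Type*} (s : Finset ι) (f : ι → Matrix m m ℂ) :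
    opNorm (∑ i ∈ s, f i) ≤ ∑ i ∈ s, opNorm (f i) := by
  unfold opNorm; rw [map_sum]; exact norm_sum_le _ _

lemma opNorm_zero' : opNorm (0 : Matrix m m ℂ) = 0 := by unfold opNorm; rw [map_zero, norm_zero]

lemma dot_le_opNorm' (M : Matrix m m ℂ) (v : m → ℂ) :
    ‖star v ⬝ᵥ M.mulVec v‖ ≤ opNorm M * ∑ x, ‖v x‖ ^ 2 := by
  classical
  set w : EuclideanSpace ℂ m := (WithLp.equiv _ _).symm v with hw
  have h1 : star v ⬝ᵥ M.mulVec v = @inner ℂ _ _ w (toEuclideanCLM (𝕜 := ℂ) M w) := by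
    rw [hw, WithLp.equiv_symm_apply, toEuclideanCLM_toLp, EuclideanSpace.inner_toLp_toLp]
    exact dotProduct_comm _ _
  have h2 : ‖w‖ ^ 2 = ∑ x, ‖v x‖ ^ 2 := by
    rw [EuclideanSpace.norm_eq, Real.sq_sqrt (by positivity)]
    rfl
  calc ‖star v ⬝ᵥ M.mulVec v‖ = ‖@inner ℂ _ _ w (toEuclideanCLM (𝕜 := ℂ) M w)‖ := by rw [h1]
    _ ≤ ‖w‖ * ‖toEuclideanCLM (𝕜 := ℂ) M w‖ := norm_inner_le_norm _ _
    _ ≤ ‖w‖ * (opNorm M * ‖w‖) :=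
        mul_le_mul_of_nonneg_left ((toEuclideanCLM (𝕜 := ℂ) M).le_opNorm w) (norm_nonneg w)
    _ = opNorm M * ‖w‖ ^ 2 := by ring
    _ = _ := by rw [h2]

lemma commute_of_disjoint' {P Q : Op Λ d} {S T : Set Λ}
    (hP : SupportedOn P S) (hQ : SupportedOn Q T)
    (hdis : ∀ i, i ∈ S → i ∉ T) : P * Q = Q * P := by
  classical
  ext x y
  by_cases hxy : ∀ i, i ∉ S → i ∉ T → x i = y i
  · set z₀ : Config Λ d := fun i => if i ∈ S then y i else x i with hz₀
    set z₁ : Config Λ d := fun i => if i ∈ T then y i else x i with hz₁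
    have e₀ : (P * Q) x y = P x z₀ * Q z₀ y := by
      rw [Matrix.mul_apply]
      refine Finset.sum_eq_single z₀ (fun z _ hz => ?_) (by simp)
      obtain ⟨i, hi⟩ := Function.ne_iff.mp hz
      by_cases hiS : i ∈ S
      · have : z i ≠ y i := by simpa [hz₀, hiS] using hi
        rw [hQ.1 z y ⟨i, hdis i hiS, this⟩, mul_zero]
      · have : x i ≠ z i := by simp only [hz₀, if_neg hiS] at hi; exact fun h => hi h.symm
        rw [hP.1 x z ⟨i, hiS, this⟩, zero_mul]
    have e₁ : (Q * P) x y = Q x z₁ * P z₁ y := by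
      rw [Matrix.mul_apply]
      refine Finset.sum_eq_single z₁ (fun z _ hz => ?_) (by simp)
      obtain ⟨i, hi⟩ := Function.ne_iff.mp hz
      by_cases hiT : i ∈ T
      · have : z i ≠ y i := by simpa [hz₁, hiT] using hi
        have hiS : i ∉ S := fun h => hdis i h hiT
        rw [hP.1 z y ⟨i, hiS, this⟩, mul_zero]
      · have : x i ≠ z i := by simp only [hz₁, if_neg hiT] at hi; exact fun h => hi h.symm
        rw [hQ.1 x z ⟨i, hiT, this⟩, zero_mul]
    have eP : P x z₀ = P z₁ y := by
      refine hP.2 x z₀ z₁ y (fun i hi => by simp [hz₀, hi]) (fun i hi => ?_)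
        (fun i hi => by simp [hz₁, hdis i hi]) (fun i hi => by simp [hz₀, hi])
      by_cases hiT : i ∈ T
      · simp [hz₁, hiT]
      · simp only [hz₁, if_neg hiT]; exact hxy i hi hiT
    have eQ : Q z₀ y = Q x z₁ := by
      refine hQ.2 z₀ y x z₁ (fun i hi => ?_) (fun i hi => by simp [hz₁, hi])
        (fun i hi => by have hiS : i ∉ S := fun h => hdis i h hi; simp [hz₀, hiS])
        (fun i hi => by simp [hz₁, hi])
      by_cases hiS : i ∈ S
      · simp [hz₀, hiS]
      · simp only [hz₀, if_neg hiS]; exact hxy i hiS hi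
    rw [e₀, e₁, eP, eQ, mul_comm]
  · push_neg at hxy
    obtain ⟨i, hiS, hiT, hne⟩ := hxy
    have hz : ∀ z : Config Λ d, P x z * Q z y = 0 := fun z => by
      by_cases h : x i = z i
      · rw [hQ.1 z y ⟨i, hiT, h ▸ hne⟩, mul_zero]
      · rw [hP.1 x z ⟨i, hiS, h⟩, zero_mul]
    have hz' : ∀ z : Config Λ d, Q x z * P z y = 0 := fun z => by
      by_cases h : x i = z i
      · rw [hP.1 z y ⟨i, hiS, h ▸ hne⟩, mul_zero]
      · rw [hQ.1 x z ⟨i, hiT, h⟩, zero_mul]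
    rw [Matrix.mul_apply, Matrix.mul_apply, Finset.sum_eq_zero (fun z _ => hz z),
      Finset.sum_eq_zero (fun z _ => hz' z)]

lemma counting' (f : Finset Λ → ℝ) (hf : ∀ W, 0 ≤ f W) (S : Finset Λ) :
    ∑ W ∈ Finset.univ.filter (fun W : Finset Λ => (W ∩ S).Nonempty), f W
      ≤ ∑ i ∈ S, ∑ W ∈ Finset.univ.filter (fun W : Finset Λ => i ∈ W), f W := by
  classical
  have hnn : ∀ (W : Finset Λ) (i : Λ), 0 ≤ if i ∈ W then f W else 0 := by
    intro W i; by_cases h : i ∈ W <;> simp [h, hf W]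
  calc ∑ W ∈ Finset.univ.filter (fun W : Finset Λ => (W ∩ S).Nonempty), f W
      ≤ ∑ W ∈ Finset.univ.filter (fun W : Finset Λ => (W ∩ S).Nonempty),
          ∑ i ∈ S, (if i ∈ W then f W else 0) := by
        refine Finset.sum_le_sum fun W hW => ?_
        obtain ⟨j, hj⟩ := (Finset.mem_filter.mp hW).2
        obtain ⟨hjW, hjS⟩ := Finset.mem_inter.mp hj
        have := Finset.single_le_sum (f := fun i => if i ∈ W then f W else 0)
          (fun i _ => hnn W i) hjS
        simpa [hjW] using this
    _ ≤ ∑ W : Finset Λ, ∑ i ∈ S, (if i ∈ W then f W else 0) :=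
        Finset.sum_le_sum_of_subset_of_nonneg (Finset.filter_subset _ _)
          (fun W _ _ => Finset.sum_nonneg fun i _ => hnn W i)
    _ = ∑ i ∈ S, ∑ W : Finset Λ, (if i ∈ W then f W else 0) := Finset.sum_comm
    _ = ∑ i ∈ S, ∑ W ∈ Finset.univ.filter (fun W : Finset Λ => i ∈ W), f W := by
        exact Finset.sum_congr rfl fun i _ => (Finset.sum_filter _ _).symm

end Aux

set_option maxHeartbeats 1600000 in
/-- **Variance–gap trade-off in the qudit lattice setting (Lemma 1).**
`H = ∑_{|Z| ≤ k} h_Z` is a `k`-local `ḡ₁`-extensive Hamiltonian with simple smallest eigenvalue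
`E₀`, unit ground state `Ω` and spectral gap `Δ > 0`; `A_L = ∑_{Z ⊆ L, |Z| ≤ k_A} a_Z` is a
`k_A`-local `1`-extensive observable supported in `L ⊆ Λ`.  Then
`Var_Ω(A_L) · Δ ≤ γ² ḡ₁ |L|` with `γ = √(18 k_A² k (k + k_A))`. -/
theorem variance_gap_tradeoff_lattice
    {Λ : Type*} [Fintype Λ] [DecidableEq Λ] (d : ℕ) (hd : 2 ≤ d)
    (n : ℕ) (hn : n = Fintype.card Λ) (hn2 : 2 ≤ n) (hdn : d < n)
    (k kA : ℕ) (hk : 1 ≤ k) (hkA : 1 ≤ kA) (gbar : ℝ)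
    (h : Finset Λ → Op Λ d)
    (hherm : ∀ Z, (h Z).IsHermitian)
    (hsupp : ∀ Z : Finset Λ, SupportedOn (h Z) (Z : Set Λ))
    (hloc : ∀ Z : Finset Λ, k < Z.card → h Z = 0)
    (hext : ∀ i : Λ,
      ∑ Z ∈ Finset.univ.filter (fun Z : Finset Λ => i ∈ Z), opNorm (h Z) ≤ gbar)
    (H : Op Λ d) (hHdef : H = ∑ Z, h Z)
    (E₀ Δ : ℝ) (hΔ : 0 < Δ)
    (Ω : Config Λ d → ℂ) (hΩ : ∑ x, ‖Ω x‖ ^ 2 = 1)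
    (heig : H.mulVec Ω = (E₀ : ℂ) • Ω)
    (hmin : ∀ ψ : Config Λ d → ℂ, ∑ x, ‖ψ x‖ ^ 2 = 1 → E₀ ≤ (star ψ ⬝ᵥ H.mulVec ψ).re)
    (hsimple : ∀ ψ : Config Λ d → ℂ, H.mulVec ψ = (E₀ : ℂ) • ψ → ∃ c : ℂ, ψ = c • Ω)
    (hgap : ∀ ψ : Config Λ d → ℂ, ∑ x, ‖ψ x‖ ^ 2 = 1 → star Ω ⬝ᵥ ψ = 0 →
      E₀ + Δ ≤ (star ψ ⬝ᵥ H.mulVec ψ).re)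
    (L : Finset Λ)
    (a : Finset Λ → Op Λ d)
    (haherm : ∀ Z, (a Z).IsHermitian)
    (hasupp : ∀ Z : Finset Λ, SupportedOn (a Z) (Z : Set Λ))
    (haL : ∀ Z : Finset Λ, ¬ Z ⊆ L → a Z = 0)
    (haloc : ∀ Z : Finset Λ, kA < Z.card → a Z = 0)
    (haext : ∀ i : Λ,
      ∑ Z ∈ Finset.univ.filter (fun Z : Finset Λ => i ∈ Z), opNorm (a Z) ≤ 1)
    (A : Op Λ d) (hAdef : A = ∑ Z, a Z)
    (γ : ℝ) (hγ : γ = Real.sqrt (18 * (kA : ℝ) ^ 2 * k * (k + kA))) :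
    ((star Ω ⬝ᵥ (A * A).mulVec Ω).re - (star Ω ⬝ᵥ A.mulVec Ω).re ^ 2) * Δ ≤
      γ ^ 2 * gbar * L.card := by
  classical
  -- basic facts
  have hΛ : Nonempty Λ := by
    have : 0 < Fintype.card Λ := by omega
    exact Fintype.card_pos_iff.mp this
  obtain ⟨i₀⟩ := hΛ
  have hgbar : 0 ≤ gbar :=
    le_trans (Finset.sum_nonneg fun Z _ => opNorm_nonneg' (h Z)) (hext i₀)
  have hHherm : Hᴴ = H := by
    rw [hHdef, Matrix.conjTranspose_sum]
    exact Finset.sum_congr rfl fun Z _ => hherm Z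
  have hAherm : Aᴴ = A := by
    rw [hAdef, Matrix.conjTranspose_sum]
    exact Finset.sum_congr rfl fun Z _ => haherm Z
  have hdot : ∀ v : Config Λ d → ℂ, star v ⬝ᵥ v = ((∑ x, ‖v x‖ ^ 2 : ℝ) : ℂ) := by
    intro v
    rw [Complex.ofReal_sum]
    refine Finset.sum_congr rfl fun x _ => ?_
    rw [Pi.star_apply, Complex.star_def, Complex.conj_mul']
    norm_cast
  have hΩ1 : star Ω ⬝ᵥ Ω = 1 := by rw [hdot, hΩ]; norm_num
  have hqconj : ∀ M : Op Λ d, star (star Ω ⬝ᵥ M.mulVec Ω) = star Ω ⬝ᵥ Mᴴ.mulVec Ω := by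
    intro M
    rw [Matrix.star_dotProduct, star_star, Matrix.star_mulVec, Matrix.dotProduct_mulVec,
      dotProduct_comm]
  -- the mean is real
  have hμR : star Ω ⬝ᵥ A.mulVec Ω = (((star Ω ⬝ᵥ A.mulVec Ω).re : ℝ) : ℂ) := by
    have := hqconj A
    rw [hAherm] at this
    exact (Complex.conj_eq_iff_re.mp this).symm
  set μ : ℝ := (star Ω ⬝ᵥ A.mulVec Ω).re with hμdef
  set At : Op Λ d := A - (μ : ℂ) • 1 with hAt
  have hAtherm : Atᴴ = At := by
    rw [hAt, Matrix.conjTranspose_sub, hAherm, Matrix.conjTranspose_smul,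
      Matrix.conjTranspose_one, Complex.star_def, Complex.conj_ofReal]
  set ψ : Config Λ d → ℂ := At.mulVec Ω with hψ
  have hadj : ∀ v : Config Λ d → ℂ, star ψ ⬝ᵥ v = star Ω ⬝ᵥ At.mulVec v := by
    intro v
    rw [hψ, Matrix.star_mulVec, hAtherm, Matrix.dotProduct_mulVec]
  have hψort : star Ω ⬝ᵥ ψ = 0 := by
    rw [hψ, hAt, Matrix.sub_mulVec, Matrix.smul_mulVec, Matrix.one_mulVec,
      dotProduct_sub, dotProduct_smul, hΩ1, smul_eq_mul, mul_one, hμR, sub_self]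
  set R : ℝ := ∑ x, ‖ψ x‖ ^ 2 with hR
  have hR0 : 0 ≤ R := Finset.sum_nonneg fun x _ => by positivity
  have hRψ : star ψ ⬝ᵥ ψ = (R : ℂ) := hdot ψ
  have hrq : star Ω ⬝ᵥ (At * At).mulVec Ω = (R : ℂ) := by
    rw [← hRψ, hadj ψ, hψ, ← Matrix.mulVec_mulVec]
  -- variance identity
  have hAt2 : At * At = A * A - (μ : ℂ) • A - (μ : ℂ) • At := by
    rw [hAt]
    simp only [Matrix.sub_mul, Matrix.mul_sub, Matrix.smul_mul, Matrix.mul_smul,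
      Matrix.one_mul, Matrix.mul_one, smul_smul]
  have hVar : (star Ω ⬝ᵥ (A * A).mulVec Ω).re - μ ^ 2 = R := by
    have e1 : star Ω ⬝ᵥ (At * At).mulVec Ω
        = star Ω ⬝ᵥ (A * A).mulVec Ω - (μ : ℂ) * (star Ω ⬝ᵥ A.mulVec Ω)
          - (μ : ℂ) * (star Ω ⬝ᵥ At.mulVec Ω) := by
      rw [hAt2]
      simp only [Matrix.sub_mulVec, Matrix.smul_mulVec, dotProduct_sub,
        dotProduct_smul, smul_eq_mul]
    rw [hrq, ← hψ, hψort, mul_zero, sub_zero, hμR] at e1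
    have e2 : star Ω ⬝ᵥ (A * A).mulVec Ω = (R : ℂ) + (μ : ℂ) * (μ : ℂ) := by
      rw [e1]; ring
    rw [e2]
    push_cast
    simp only [Complex.add_re, Complex.ofReal_re, Complex.mul_re, Complex.ofReal_im]
    ring
  -- commutators
  set B : Op Λ d := H * A - A * H with hB
  set Cc : Op Λ d := A * B - B * A with hCcdef
  have hcm : ∀ X Y : Op Λ d, opNorm (X * Y - Y * X) ≤ 2 * opNorm X * opNorm Y := by
    intro X Y
    calc opNorm (X * Y - Y * X) ≤ opNorm (X * Y) + opNorm (Y * X) := opNorm_sub_le' _ _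
      _ ≤ opNorm X * opNorm Y + opNorm Y * opNorm X :=
          add_le_add (opNorm_mul_le' _ _) (opNorm_mul_le' _ _)
      _ = 2 * opNorm X * opNorm Y := by ring
  -- gap bound : 2 * (R * Δ) ≤ opNorm Cc
  have hgapR : 2 * (R * Δ) ≤ opNorm Cc := by
    have hBanti : Bᴴ = -B := by
      rw [hB, Matrix.conjTranspose_sub, Matrix.conjTranspose_mul, Matrix.conjTranspose_mul,
        hAherm, hHherm, neg_sub]
    have hCcAt : At * B - B * At = Cc := by
      rw [hAt, hCcdef]
      simp only [Matrix.sub_mul, Matrix.mul_sub, Matrix.smul_mul, Matrix.mul_smul,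
        Matrix.one_mul, Matrix.mul_one]
      abel
    set z : ℂ := star Ω ⬝ᵥ (At * B).mulVec Ω with hzdef
    have hzconj : star z = -(star Ω ⬝ᵥ (B * At).mulVec Ω) := by
      rw [hzdef, hqconj, Matrix.conjTranspose_mul, hBanti, hAtherm, Matrix.neg_mul,
        Matrix.neg_mulVec, dotProduct_neg]
    have hqC : star Ω ⬝ᵥ Cc.mulVec Ω = z + star z := by
      rw [hzconj, ← hCcAt, Matrix.sub_mulVec, dotProduct_sub, ← hzdef]
      ring
    have hreC : (star Ω ⬝ᵥ Cc.mulVec Ω).re = 2 * z.re := by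
      rw [hqC, Complex.add_re, Complex.star_def, Complex.conj_re]
      ring
    have hΔR : Δ * R ≤ z.re := by
      rcases eq_or_lt_of_le hR0 with h0 | hpos
      · have hψ0 : ψ = 0 := by
          funext x
          have hx : ‖ψ x‖ ^ 2 = 0 := by
            have := (Finset.sum_eq_zero_iff_of_nonneg
              (fun y (_ : y ∈ Finset.univ) => (by positivity : (0:ℝ) ≤ ‖ψ y‖ ^ 2))).mp (hR.symm.trans h0.symm)
            exact this x (Finset.mem_univ x)
          have : ‖ψ x‖ = 0 := by nlinarith [norm_nonneg (ψ x)]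
          simpa using norm_eq_zero.mp this
        have hz0 : z = 0 := by
          rw [hzdef, ← Matrix.mulVec_mulVec, ← hadj (B.mulVec Ω), hψ0]
          simp
        rw [hz0, ← h0, mul_zero]
        simp
      · set c : ℝ := (Real.sqrt R)⁻¹ with hc
        set ψ' : Config Λ d → ℂ := fun x => (c : ℂ) * ψ x with hψ'
        have e0 : ψ' = (c : ℂ) • ψ := rfl
        have hcsq : ‖(c : ℂ)‖ ^ 2 = R⁻¹ := by
          rw [Complex.norm_real, Real.norm_eq_abs, _root_.sq_abs, hc, inv_pow, Real.sq_sqrt hR0]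
        have hnorm : ∑ x, ‖ψ' x‖ ^ 2 = 1 := by
          simp only [hψ', norm_mul, mul_pow, ← Finset.mul_sum, hcsq, ← hR]
          exact inv_mul_cancel₀ hpos.ne'
        have hort : star Ω ⬝ᵥ ψ' = 0 := by
          rw [e0, dotProduct_smul, hψort, smul_zero]
        have h1 := hgap ψ' hnorm hort
        have hBB : H * At - At * H = B := by
          rw [hAt, hB]
          simp only [Matrix.sub_mul, Matrix.mul_sub, Matrix.smul_mul, Matrix.mul_smul,
            Matrix.one_mul, Matrix.mul_one]
          abel
        have e1 : star ψ ⬝ᵥ H.mulVec ψ = star Ω ⬝ᵥ (At * (H * At)).mulVec Ω := by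
          rw [hadj (H.mulVec ψ), hψ, Matrix.mulVec_mulVec, Matrix.mulVec_mulVec, Matrix.mul_assoc]
        have e2 : At * (H * At) = At * B + At * At * H := by
          have e2' : H * At = B + At * H := by rw [← hBB]; abel
          rw [e2', Matrix.mul_add, ← Matrix.mul_assoc]
        have e3 : star Ω ⬝ᵥ (At * At * H).mulVec Ω = ((E₀ * R : ℝ) : ℂ) := by
          rw [← Matrix.mulVec_mulVec, heig, Matrix.mulVec_smul, dotProduct_smul, hrq,
            smul_eq_mul]
          push_cast
          ring
        have h3 : star ψ ⬝ᵥ H.mulVec ψ = z + ((E₀ * R : ℝ) : ℂ) := by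
          rw [e1, e2, Matrix.add_mulVec, dotProduct_add, e3, ← hzdef]
        have h2 : (star ψ' ⬝ᵥ H.mulVec ψ').re = c ^ 2 * (z.re + E₀ * R) := by
          have e4 : star ψ' ⬝ᵥ H.mulVec ψ' = ((c ^ 2 : ℝ) : ℂ) * (star ψ ⬝ᵥ H.mulVec ψ) := by
            rw [e0, star_smul, smul_dotProduct, Matrix.mulVec_smul,
              dotProduct_smul]
            simp only [smul_eq_mul, Complex.star_def, Complex.conj_ofReal]
            push_cast
            ring
          rw [e4, h3]
          simp only [Complex.mul_re, Complex.add_re, Complex.add_im, Complex.ofReal_re,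
            Complex.ofReal_im]
          ring
        have hc2 : c ^ 2 = R⁻¹ := by rw [hc, inv_pow, Real.sq_sqrt hR0]
        rw [h2, hc2] at h1
        have h6 : (E₀ + Δ) * R ≤ z.re + E₀ * R := by
          calc (E₀ + Δ) * R ≤ R⁻¹ * (z.re + E₀ * R) * R :=
                mul_le_mul_of_nonneg_right h1 hpos.le
            _ = z.re + E₀ * R := by field_simp
        have h7 : (E₀ + Δ) * R = E₀ * R + Δ * R := by ring
        linarith [h6, h7]
    calc 2 * (R * Δ) ≤ 2 * z.re := by
          have := mul_comm R Δ
          linarith [hΔR]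
      _ = (star Ω ⬝ᵥ Cc.mulVec Ω).re := hreC.symm
      _ ≤ ‖star Ω ⬝ᵥ Cc.mulVec Ω‖ := Complex.re_le_norm _
      _ ≤ opNorm Cc * ∑ x, ‖Ω x‖ ^ 2 := dot_le_opNorm' _ _
      _ = opNorm Cc := by rw [hΩ, mul_one]
  -- locality bound
  have hlocal : opNorm Cc ≤ 4 * ((k : ℝ) + kA) * (kA * gbar * L.card) := by
    have hBsum : B = ∑ Z, ∑ W, (h Z * a W - a W * h Z) := by
      have h1 : H * A = ∑ Z, ∑ W, h Z * a W := by rw [hHdef, hAdef, Finset.sum_mul_sum]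
      have h2 : A * H = ∑ Z, ∑ W, a W * h Z := by
        rw [hHdef, hAdef, Finset.sum_mul_sum]; exact Finset.sum_comm
      rw [hB, h1, h2, ← Finset.sum_sub_distrib]
      exact Finset.sum_congr rfl fun Z _ => by rw [← Finset.sum_sub_distrib]
    have hCsum : Cc = ∑ V, ∑ Z, ∑ W,
        (a V * (h Z * a W - a W * h Z) - (h Z * a W - a W * h Z) * a V) := by
      have h1 : Cc = ∑ V, (a V * B - B * a V) := by
        rw [hCcdef, hAdef, Finset.sum_mul, Finset.mul_sum, ← Finset.sum_sub_distrib]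
      rw [h1]
      refine Finset.sum_congr rfl fun V _ => ?_
      rw [hBsum, Finset.mul_sum, Finset.sum_mul, ← Finset.sum_sub_distrib]
      refine Finset.sum_congr rfl fun Z _ => ?_
      rw [Finset.mul_sum, Finset.sum_mul, ← Finset.sum_sub_distrib]
    have hin0 : ∀ Z W : Finset Λ, ¬(Z ∩ W).Nonempty → h Z * a W - a W * h Z = 0 := by
      intro Z W hZW
      have hdis : ∀ i, i ∈ (Z : Set Λ) → i ∉ (W : Set Λ) := fun i hiZ hiW =>
        hZW ⟨i, Finset.mem_inter.mpr ⟨Finset.mem_coe.mp hiZ, Finset.mem_coe.mp hiW⟩⟩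
      rw [commute_of_disjoint' (hsupp Z) (hasupp W) hdis, sub_self]
    have hout0 : ∀ V Z W : Finset Λ, ¬(V ∩ (Z ∪ W)).Nonempty →
        a V * (h Z * a W - a W * h Z) - (h Z * a W - a W * h Z) * a V = 0 := by
      intro V Z W hV
      have hdZ : ∀ i, i ∈ (V : Set Λ) → i ∉ (Z : Set Λ) := fun i hi hj =>
        hV ⟨i, Finset.mem_inter.mpr ⟨Finset.mem_coe.mp hi,
          Finset.mem_union_left _ (Finset.mem_coe.mp hj)⟩⟩
      have hdW : ∀ i, i ∈ (V : Set Λ) → i ∉ (W : Set Λ) := fun i hi hj =>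
        hV ⟨i, Finset.mem_inter.mpr ⟨Finset.mem_coe.mp hi,
          Finset.mem_union_right _ (Finset.mem_coe.mp hj)⟩⟩
      have c1 : a V * h Z = h Z * a V := commute_of_disjoint' (hasupp V) (hsupp Z) hdZ
      have c2 : a V * a W = a W * a V := commute_of_disjoint' (hasupp V) (hasupp W) hdW
      have e1 : a V * (h Z * a W) = h Z * a W * a V := by
        rw [← Matrix.mul_assoc, c1, Matrix.mul_assoc, c2, ← Matrix.mul_assoc]
      have e2 : a V * (a W * h Z) = a W * h Z * a V := by
        rw [← Matrix.mul_assoc, c2, Matrix.mul_assoc, c1, ← Matrix.mul_assoc]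
      rw [Matrix.mul_sub, Matrix.sub_mul, e1, e2, sub_self]
    have hZcard : ∀ Z : Finset Λ, h Z ≠ 0 → Z.card ≤ k := fun Z hZ =>
      le_of_not_gt fun hc => hZ (hloc Z hc)
    have hWcard : ∀ W : Finset Λ, a W ≠ 0 → W.card ≤ kA := fun W hW =>
      le_of_not_gt fun hc => hW (haloc W hc)
    set nm : Finset Λ → Finset Λ → Finset Λ → ℝ := fun V Z W =>
      opNorm (a V * (h Z * a W - a W * h Z) - (h Z * a W - a W * h Z) * a V) with hnm
    have hnm0 : ∀ V Z W : Finset Λ, h Z * a W - a W * h Z = 0 → nm V Z W = 0 := by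
      intro V Z W hzero
      simp only [hnm, hzero, Matrix.mul_zero, Matrix.zero_mul, sub_self]
      exact opNorm_zero'
    have step1 : opNorm Cc ≤ ∑ Z, ∑ W, ∑ V, nm V Z W := by
      have t : opNorm Cc ≤ ∑ V, ∑ Z, ∑ W, nm V Z W := by
        rw [hCsum]
        refine le_trans (opNorm_sum_le' _ _) (Finset.sum_le_sum fun V _ => ?_)
        refine le_trans (opNorm_sum_le' _ _) (Finset.sum_le_sum fun Z _ => ?_)
        exact opNorm_sum_le' _ _
      refine le_trans t (le_of_eq ?_)
      rw [Finset.sum_comm]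
      exact Finset.sum_congr rfl fun Z _ => Finset.sum_comm
    have step2 : ∀ Z W : Finset Λ, h Z ≠ 0 → a W ≠ 0 →
        ∑ V, nm V Z W ≤ 4 * ((k : ℝ) + kA) * (opNorm (h Z) * opNorm (a W)) := by
      intro Z W hZ hW
      have hcard : ((Z ∪ W).card : ℝ) ≤ (k : ℝ) + kA := by
        have := le_trans (Finset.card_union_le Z W) (add_le_add (hZcard Z hZ) (hWcard W hW))
        exact_mod_cast this
      have hCnn : (0 : ℝ) ≤ 4 * (opNorm (h Z) * opNorm (a W)) :=
        mul_nonneg (by norm_num) (mul_nonneg (opNorm_nonneg' _) (opNorm_nonneg' _))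
      have hfilter : ∑ V, nm V Z W
          = ∑ V ∈ Finset.univ.filter (fun V : Finset Λ => (V ∩ (Z ∪ W)).Nonempty), nm V Z W := by
        refine (Finset.sum_filter_of_ne fun V _ hne => ?_).symm
        by_contra hc
        exact hne (by simp only [hnm]; rw [hout0 V Z W hc, opNorm_zero'])
      have hbound : ∀ V : Finset Λ,
          nm V Z W ≤ opNorm (a V) * (4 * (opNorm (h Z) * opNorm (a W))) := by
        intro V
        calc nm V Z W ≤ 2 * opNorm (a V) * opNorm (h Z * a W - a W * h Z) :=
              hcm (a V) (h Z * a W - a W * h Z)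
          _ ≤ 2 * opNorm (a V) * (2 * opNorm (h Z) * opNorm (a W)) :=
              mul_le_mul_of_nonneg_left (hcm (h Z) (a W))
                (mul_nonneg (by norm_num) (opNorm_nonneg' _))
          _ = opNorm (a V) * (4 * (opNorm (h Z) * opNorm (a W))) := by ring
      calc ∑ V, nm V Z W
          = ∑ V ∈ Finset.univ.filter (fun V : Finset Λ => (V ∩ (Z ∪ W)).Nonempty), nm V Z W :=
            hfilter
        _ ≤ ∑ V ∈ Finset.univ.filter (fun V : Finset Λ => (V ∩ (Z ∪ W)).Nonempty),
              opNorm (a V) * (4 * (opNorm (h Z) * opNorm (a W))) :=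
            Finset.sum_le_sum fun V _ => hbound V
        _ = (∑ V ∈ Finset.univ.filter (fun V : Finset Λ => (V ∩ (Z ∪ W)).Nonempty),
              opNorm (a V)) * (4 * (opNorm (h Z) * opNorm (a W))) := by rw [← Finset.sum_mul]
        _ ≤ ((k : ℝ) + kA) * (4 * (opNorm (h Z) * opNorm (a W))) := by
            refine mul_le_mul_of_nonneg_right ?_ hCnn
            calc ∑ V ∈ Finset.univ.filter (fun V : Finset Λ => (V ∩ (Z ∪ W)).Nonempty),
                  opNorm (a V)
                ≤ ∑ i ∈ Z ∪ W, ∑ V ∈ Finset.univ.filter (fun V : Finset Λ => i ∈ V),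
                    opNorm (a V) := counting' _ (fun V => opNorm_nonneg' _) (Z ∪ W)
              _ ≤ ∑ _i ∈ Z ∪ W, (1 : ℝ) := Finset.sum_le_sum fun i _ => haext i
              _ = ((Z ∪ W).card : ℝ) := by simp
              _ ≤ (k : ℝ) + kA := hcard
        _ = 4 * ((k : ℝ) + kA) * (opNorm (h Z) * opNorm (a W)) := by ring
    have hWzero : ∀ W : Finset Λ, ¬(W ∩ L).Nonempty → ∀ Z V : Finset Λ, nm V Z W = 0 := by
      intro W hWL Z V
      by_cases hWne : W.Nonempty
      · have hsub : ¬ W ⊆ L := fun hsub => hWL (by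
          obtain ⟨j, hj⟩ := hWne
          exact ⟨j, Finset.mem_inter.mpr ⟨hj, hsub hj⟩⟩)
        refine hnm0 V Z W ?_
        rw [haL W hsub, Matrix.mul_zero, Matrix.zero_mul, sub_self]
      · have hW0 : ¬(Z ∩ W).Nonempty := by
          rw [Finset.not_nonempty_iff_eq_empty.mp hWne]
          simp
        exact hnm0 V Z W (hin0 Z W hW0)
    have step4 : ∑ Z, ∑ W, ∑ V, nm V Z W
        = ∑ W ∈ Finset.univ.filter (fun W : Finset Λ => (W ∩ L).Nonempty),
            ∑ Z, ∑ V, nm V Z W := by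
      rw [Finset.sum_comm]
      refine (Finset.sum_filter_of_ne fun W _ hne => ?_).symm
      by_contra hc
      exact hne (Finset.sum_eq_zero fun Z _ => Finset.sum_eq_zero fun V _ => hWzero W hc Z V)
    have step5 : ∀ W : Finset Λ, (W ∩ L).Nonempty →
        ∑ Z, ∑ V, nm V Z W ≤ 4 * ((k : ℝ) + kA) * ((kA : ℝ) * gbar) * opNorm (a W) := by
      intro W _
      by_cases hW : a W = 0
      · rw [hW, opNorm_zero', mul_zero]
        refine le_of_eq (Finset.sum_eq_zero fun Z _ => Finset.sum_eq_zero fun V _ => ?_)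
        refine hnm0 V Z W ?_
        rw [hW, Matrix.mul_zero, Matrix.zero_mul, sub_self]
      · have hDnn : (0 : ℝ) ≤ 4 * ((k : ℝ) + kA) * opNorm (a W) :=
          mul_nonneg (mul_nonneg (by norm_num) (by positivity)) (opNorm_nonneg' _)
        have hfilZ : ∑ Z, ∑ V, nm V Z W
            = ∑ Z ∈ Finset.univ.filter (fun Z : Finset Λ => (Z ∩ W).Nonempty),
                ∑ V, nm V Z W := by
          refine (Finset.sum_filter_of_ne fun Z _ hne => ?_).symm
          by_contra hc
          exact hne (Finset.sum_eq_zero fun V _ => hnm0 V Z W (hin0 Z W hc))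
        have hinner : ∀ Z : Finset Λ,
            ∑ V, nm V Z W ≤ (4 * ((k : ℝ) + kA) * opNorm (a W)) * opNorm (h Z) := by
          intro Z
          by_cases hZ : h Z = 0
          · rw [hZ, opNorm_zero', mul_zero]
            refine le_of_eq (Finset.sum_eq_zero fun V _ => ?_)
            refine hnm0 V Z W ?_
            rw [hZ, Matrix.mul_zero, Matrix.zero_mul, sub_self]
          · calc ∑ V, nm V Z W ≤ 4 * ((k : ℝ) + kA) * (opNorm (h Z) * opNorm (a W)) :=
                step2 Z W hZ hW
              _ = (4 * ((k : ℝ) + kA) * opNorm (a W)) * opNorm (h Z) := by ring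
        calc ∑ Z, ∑ V, nm V Z W
            = ∑ Z ∈ Finset.univ.filter (fun Z : Finset Λ => (Z ∩ W).Nonempty),
                ∑ V, nm V Z W := hfilZ
          _ ≤ ∑ Z ∈ Finset.univ.filter (fun Z : Finset Λ => (Z ∩ W).Nonempty),
                (4 * ((k : ℝ) + kA) * opNorm (a W)) * opNorm (h Z) :=
              Finset.sum_le_sum fun Z _ => hinner Z
          _ = (4 * ((k : ℝ) + kA) * opNorm (a W)) *
                ∑ Z ∈ Finset.univ.filter (fun Z : Finset Λ => (Z ∩ W).Nonempty), opNorm (h Z) := by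
              rw [Finset.mul_sum]
          _ ≤ (4 * ((k : ℝ) + kA) * opNorm (a W)) * ((kA : ℝ) * gbar) := by
              refine mul_le_mul_of_nonneg_left ?_ hDnn
              calc ∑ Z ∈ Finset.univ.filter (fun Z : Finset Λ => (Z ∩ W).Nonempty), opNorm (h Z)
                  ≤ ∑ i ∈ W, ∑ Z ∈ Finset.univ.filter (fun Z : Finset Λ => i ∈ Z), opNorm (h Z) :=
                    counting' _ (fun Z => opNorm_nonneg' _) W
                _ ≤ ∑ _i ∈ W, gbar := Finset.sum_le_sum fun i _ => hext i
                _ = (W.card : ℝ) * gbar := by rw [Finset.sum_const, nsmul_eq_mul]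
                _ ≤ (kA : ℝ) * gbar := by
                    refine mul_le_mul_of_nonneg_right ?_ hgbar
                    exact_mod_cast hWcard W hW
          _ = 4 * ((k : ℝ) + kA) * ((kA : ℝ) * gbar) * opNorm (a W) := by ring
    have hEnn : (0 : ℝ) ≤ 4 * ((k : ℝ) + kA) * ((kA : ℝ) * gbar) :=
      mul_nonneg (mul_nonneg (by norm_num) (by positivity)) (mul_nonneg (by positivity) hgbar)
    calc opNorm Cc ≤ ∑ Z, ∑ W, ∑ V, nm V Z W := step1
      _ = ∑ W ∈ Finset.univ.filter (fun W : Finset Λ => (W ∩ L).Nonempty),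
            ∑ Z, ∑ V, nm V Z W := step4
      _ ≤ ∑ W ∈ Finset.univ.filter (fun W : Finset Λ => (W ∩ L).Nonempty),
            4 * ((k : ℝ) + kA) * ((kA : ℝ) * gbar) * opNorm (a W) :=
          Finset.sum_le_sum fun W hWmem => step5 W (Finset.mem_filter.mp hWmem).2
      _ = 4 * ((k : ℝ) + kA) * ((kA : ℝ) * gbar) *
            ∑ W ∈ Finset.univ.filter (fun W : Finset Λ => (W ∩ L).Nonempty), opNorm (a W) := by
          rw [Finset.mul_sum]
      _ ≤ 4 * ((k : ℝ) + kA) * ((kA : ℝ) * gbar) * (L.card : ℝ) := by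
          refine mul_le_mul_of_nonneg_left ?_ hEnn
          calc ∑ W ∈ Finset.univ.filter (fun W : Finset Λ => (W ∩ L).Nonempty), opNorm (a W)
              ≤ ∑ i ∈ L, ∑ W ∈ Finset.univ.filter (fun W : Finset Λ => i ∈ W), opNorm (a W) :=
                counting' _ (fun W => opNorm_nonneg' _) L
            _ ≤ ∑ _i ∈ L, (1 : ℝ) := Finset.sum_le_sum fun i _ => haext i
            _ = (L.card : ℝ) := by simp
      _ = 4 * ((k : ℝ) + kA) * ((kA : ℝ) * gbar * (L.card : ℝ)) := by ring
  -- conclusion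
  have hfin : R * Δ ≤ 2 * ((k : ℝ) + kA) * (kA * gbar * L.card) := by linarith
  have hγ2 : γ ^ 2 = 18 * (kA : ℝ) ^ 2 * k * (k + kA) := by
    rw [hγ, Real.sq_sqrt]
    positivity
  have hgoal : ((star Ω ⬝ᵥ (A * A).mulVec Ω).re - μ ^ 2) * Δ = R * Δ := by rw [hVar]
  rw [hgoal, hγ2]
  have hk1 : (1 : ℝ) ≤ (k : ℝ) := by exact_mod_cast hk
  have hkA1 : (1 : ℝ) ≤ (kA : ℝ) := by exact_mod_cast hkA
  have hL0 : (0 : ℝ) ≤ (L.card : ℝ) := Nat.cast_nonneg _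
  have h1 : (0:ℝ) ≤ 18 * (kA:ℝ)^2 * k - 2 * kA := by nlinarith
  have h2 : (0:ℝ) ≤ (18*(kA:ℝ)^2*k - 2*kA) * ((k:ℝ)+kA) * (gbar * L.card) :=
    mul_nonneg (mul_nonneg h1 (by linarith)) (mul_nonneg hgbar hL0)
  nlinarith [h2, hfin]


end FullyConnected
end

section
/- For every Hermitian complex matrix H (of any finite size) and every real β > 0, exp(−βH²) = (1/(2√(πβ))) · ∫_{−∞}^{∞} exp(−itH) · e^{−t²/(4β)} dt, where exp denotes the matrix exponential and the integral is the Bochner integral of the matrix-valued function t ↦ exp(−itH) e^{−t²/(4β)} over ℝ. -/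
/-!
Diagonalise `H = U D U*` with `U` unitary and `D` real diagonal. Conjugation by `U` is a continuous
`ℂ`-algebra automorphism, so it commutes with the matrix exponential and with the Bochner integral;
both sides therefore reduce entrywise on the diagonal to the scalar Gaussian Fourier transform
`∫ e^{-t²/(4β)} e^{-itλ} dt = 2√(πβ) e^{-βλ²}`.
-/

open Matrix MeasureTheory Unitary

attribute [local instance] Matrix.frobeniusNormedAddCommGroup Matrix.frobeniusNormedSpace

open Complex in
theorem integral_gaussian_smul_cexp_neg_I_mul {β : ℝ} (hβ : 0 < β) (l : ℂ) :
    ∫ t : ℝ, Real.exp (-t ^ 2 / (4 * β)) • cexp (-(I * t) * l) =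
      (2 * √(Real.pi * β)) • cexp (-β * l ^ 2) := by
  set b : ℂ := (((4 * β)⁻¹ : ℝ) : ℂ)
  have hb : 0 < b.re := by simp [b]; positivity
  have hintegrand (t : ℝ) : Real.exp (-t ^ 2 / (4 * β)) • cexp (-(I * t) * l) =
      cexp (I * -l * t) * cexp (-b * t ^ 2) := by
    rw [real_smul, ofReal_exp, ← Complex.exp_add, ← Complex.exp_add]
    push_cast [b]
    ring_nf
  have hsqrt : (Real.pi / b) ^ (1 / 2 : ℂ) = ((2 * √(Real.pi * β) : ℝ) : ℂ) := by
    rw [show (Real.pi / b) = ((2 * √(Real.pi * β)) ^ 2 : ℝ) by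
      rw [mul_pow, Real.sq_sqrt (by positivity)]; push_cast [b]; field_simp; ring]
    rw [show (1 / 2 : ℂ) = ((1 / 2 : ℝ) : ℂ) by norm_num, ← ofReal_cpow (by positivity),
      ← Real.sqrt_eq_rpow, Real.sqrt_sq (by positivity)]
  simp_rw [hintegrand, fourierIntegral_gaussian hb, hsqrt, real_smul]
  congr 2
  push_cast [b]
  field_simp

theorem integrable_gaussian_smul_cexp_neg_I_mul {β : ℝ} (hβ : 0 < β) (l : ℂ) :
    Integrable fun t : ℝ => Real.exp (-t ^ 2 / (4 * β)) • Complex.exp (-(Complex.I * t) * l) :=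
  .of_integral_ne_zero <| by
    rw [integral_gaussian_smul_cexp_neg_I_mul hβ l]
    exact smul_ne_zero (by positivity) (Complex.exp_ne_zero _)

theorem integral_comp_comm_of_finiteDimensional {X 𝕜 E F G : Type*} [MeasurableSpace X]
    {μ : Measure X} [RCLike 𝕜] [NormedAddCommGroup E] [NormedSpace 𝕜 E] [NormedSpace ℝ E]
    [FiniteDimensional 𝕜 E] [NormedAddCommGroup F] [NormedSpace 𝕜 F] [NormedSpace ℝ F]
    [EquivLike G E F] [LinearEquivClass G 𝕜 E F] (Φ : G) (f : X → E) :
    ∫ x, Φ (f x) ∂μ = Φ (∫ x, f x ∂μ) :=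
  (SemilinearEquivClass.semilinearEquiv Φ : E ≃ₗ[𝕜] F).toContinuousLinearEquiv.integral_comp_comm f

namespace Matrix

variable {m : Type*} [Fintype m] [DecidableEq m]

theorem exp_unitary_conj {𝔸 : Type*} [NormedRing 𝔸] [StarRing 𝔸] [NormedAlgebra ℚ 𝔸]
    [CompleteSpace 𝔸] (U : unitary (Matrix m m 𝔸)) (A : Matrix m m 𝔸) :
    NormedSpace.exp (U * A * star (U : Matrix m m 𝔸)) =
      U * NormedSpace.exp A * star (U : Matrix m m 𝔸) := by
  simpa [← Unitary.star_eq_inv] using exp_units_conj (Unitary.toUnits U) A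

theorem exp_diagonal_eq_diagonal_cexp (v : m → ℂ) :
    NormedSpace.exp (diagonal v) = diagonal fun k => Complex.exp (v k) := by
  rw [exp_diagonal, Pi.exp_def, ← Complex.exp_eq_exp_ℂ]

theorem exp_smul_conjStarAlgAut_diagonal (U : unitary (Matrix m m ℂ)) (c : ℂ) (v : m → ℂ) :
    NormedSpace.exp (c • conjStarAlgAut ℂ _ U (diagonal v)) =
      conjStarAlgAut ℂ _ U (diagonal fun k => Complex.exp (c * v k)) := by
  rw [← map_smul, conjStarAlgAut_apply, exp_unitary_conj, ← diagonal_smul,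
    exp_diagonal_eq_diagonal_cexp]
  rfl

theorem integral_diagonal {X 𝕜 : Type*} [MeasurableSpace X] {μ : Measure X} [RCLike 𝕜]
    {f : X → m → 𝕜} (hf : Integrable f μ) :
    ∫ x, diagonal (f x) ∂μ = diagonal (∫ x, f x ∂μ) :=
  (⟨diagonalLinearMap m 𝕜 𝕜, continuous_id.matrix_diagonal⟩ :
    (m → 𝕜) →L[𝕜] Matrix m m 𝕜).integral_comp_comm hf

end Matrix

/-- **Hubbard–Stratonovich (Gaussian Fourier transform) representation of the Gaussian of a
Hermitian matrix.**  For every Hermitian complex matrix `H` and every `β > 0`,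
`exp(−βH²) = (1/(2√(πβ))) ∫ exp(−itH) e^{−t²/(4β)} dt`, where the integral is the Bochner
integral of the matrix-valued function over `ℝ`. -/
theorem hubbard_stratonovich
    {n : ℕ} (H : Matrix (Fin n) (Fin n) ℂ) (hH : H.IsHermitian) (β : ℝ) (hβ : 0 < β) :
    NormedSpace.exp ((-(β : ℂ)) • (H * H)) =
      (1 / (2 * Real.sqrt (Real.pi * β))) •
        ∫ t : ℝ, Real.exp (-t ^ 2 / (4 * β)) • NormedSpace.exp ((-(Complex.I * (t : ℂ))) • H) := by
  set U := hH.eigenvectorUnitary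
  set d : Fin n → ℂ := RCLike.ofReal ∘ hH.eigenvalues
  have hH' : H = conjStarAlgAut ℂ _ U (diagonal d) := hH.spectral_theorem
  have hsmul (r : ℝ) (v : Fin n → ℂ) :
      r • conjStarAlgAut ℂ _ U (diagonal v) = conjStarAlgAut ℂ _ U (diagonal fun k => r • v k) := by
    rw [← Complex.coe_smul, ← map_smul, ← diagonal_smul]
    rfl
  have hlhs : NormedSpace.exp ((-(β : ℂ)) • (H * H)) =
      conjStarAlgAut ℂ _ U (diagonal fun k => Complex.exp (-β * d k ^ 2)) := by
    simp_rw [hH', ← map_mul, diagonal_mul_diagonal, exp_smul_conjStarAlgAut_diagonal, sq]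
  set w : ℝ → Fin n → ℂ :=
    fun t k => Real.exp (-t ^ 2 / (4 * β)) • Complex.exp (-(Complex.I * t) * d k)
  have hw : Integrable w := Integrable.of_eval fun k => integrable_gaussian_smul_cexp_neg_I_mul hβ _
  have hw_integral : ∫ t, w t = fun k => (2 * √(Real.pi * β)) • Complex.exp (-β * d k ^ 2) :=
    funext fun k => (eval_integral hw.eval k).trans (integral_gaussian_smul_cexp_neg_I_mul hβ _)
  rw [hlhs]
  simp_rw [hH', exp_smul_conjStarAlgAut_diagonal, hsmul]
  rw [integral_comp_comm_of_finiteDimensional, integral_diagonal hw, hw_integral, ← hsmul,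
    smul_smul, one_div, inv_mul_cancel₀ (by positivity), one_smul]
end

section
/- Let L be a finite set of sites, each carrying ℂ^d (d ≥ 2), with total Hilbert space the tensor product over L. Fix a unit vector e_i ∈ ℂ^d for each i ∈ L, let Q_i be the operator supported on {i} acting as 1 − |e_i⟩⟨e_i| at site i, let M_L := ∑_{i∈L} Q_i, and for real z ≥ 0 let Π_{≤z} be the spectral projection of M_L onto eigenvalues ≤ z. Let A = ∑_{i∈L} a_i where each a_i is Hermitian, supported on {i}, and satisfies ‖a_i‖ ≤ 1, and set ε_A := ∑_{i∈L} ⟨e_i, a_i e_i⟩. Then ‖ Π_{≤z} (A − ε_A · 1) Π_{≤z} ‖ ≤ 4 √( |L| · z ). -/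
set_option maxHeartbeats 1600000
set_option synthInstance.maxHeartbeats 400000


open Matrix

namespace FullyConnected

variable {Λ : Type*} [Fintype Λ] [DecidableEq Λ] {d : ℕ}

/-- The operator acting as the `d × d` matrix `m` at site `i` and as the identity elsewhere. -/
def siteOp (i : Λ) (m : Matrix (Fin d) (Fin d) ℂ) : Op Λ d :=
  fun x y => if ∀ j, j ≠ i → x j = y j then m (x i) (y i) else 0

/-- The rank-one projection `|e⟩⟨e|` onto a unit vector `e ∈ ℂ^d`. -/
def projMat (e : Fin d → ℂ) : Matrix (Fin d) (Fin d) ℂ :=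
  Matrix.vecMulVec e (star e)

/-- The reduced density matrix of the state `Ω` at the single site `i`:
`(ρ_i)_{a,b} = ∑_y Ω(a⊔y) conj (Ω(b⊔y))`. -/
noncomputable def reducedAt (Ω : Config Λ d → ℂ) (i : Λ) : Matrix (Fin d) (Fin d) ℂ :=
  fun a b => ∑ x : Config Λ d,
    if x i = a then Ω x * (starRingEnd ℂ) (Ω (Function.update x i b)) else 0

/-- `A` is a Hermitian `1`-local `1`-extensive operator supported on `W`:
`A = ∑_j b_j` with each `b_j` Hermitian, supported on the single site `j`, vanishing for
`j ∉ W`, and of operator norm at most `1`. -/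
def OneLocalOneExtensive (A : Op Λ d) (W : Set Λ) : Prop :=
  ∃ b : Λ → Op Λ d,
    (∀ j, (b j).IsHermitian) ∧ (∀ j, SupportedOn (b j) {j}) ∧
    (∀ j, j ∉ W → b j = 0) ∧ (∀ j, opNorm (b j) ≤ 1) ∧ A = ∑ j, b j

/-- The all-to-all condition at site `i`:  `Ĥ_i := ∑_{Z ∋ i} h_Z` decomposes as
`Ĥ_i = V_i + (1/n) ∑_s J_s H_{i,s} H_{Λ_i,s}` with `‖V_i‖ ≤ g₀`, `∑_s |J_s| ≤ g₁`, the `H_{i,s}`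
Hermitian supported on `{i}` with norm at most `1`, and the `H_{Λ_i,s}` Hermitian `1`-local
`1`-extensive operators supported on `Λ∖{i}`. -/
def AllToAllAt (h : Finset Λ → Op Λ d) (i : Λ) (n : ℕ) (g₀ g₁ : ℝ) : Prop :=
  ∃ (S : ℕ) (J : Fin S → ℝ) (V : Op Λ d) (Hi HL : Fin S → Op Λ d),
    V.IsHermitian ∧ SupportedOn V {i} ∧ opNorm V ≤ g₀ ∧
    (∑ s, |J s|) ≤ g₁ ∧
    (∀ s, (Hi s).IsHermitian ∧ SupportedOn (Hi s) {i} ∧ opNorm (Hi s) ≤ 1) ∧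
    (∀ s, (HL s).IsHermitian ∧ OneLocalOneExtensive (HL s) ({i}ᶜ : Set Λ)) ∧
    (∑ Z ∈ Finset.univ.filter (fun Z : Finset Λ => i ∈ Z), h Z)
      = V + ((n : ℂ))⁻¹ • ∑ s, (J s : ℂ) • (Hi s * HL s)

/-- `P` is the spectral projection of the Hermitian matrix `A` onto the eigenvalues `≤ z`:
`P` is a Hermitian idempotent fixing every eigenvector of `A` with eigenvalue `≤ z` and
annihilating every eigenvector with eigenvalue `> z`. -/
def IsSpectralProjLE {m : Type*} [Fintype m] (A P : Matrix m m ℂ) (z : ℝ) : Prop :=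
  P.IsHermitian ∧ P * P = P ∧
  (∀ μ : ℝ, μ ≤ z → ∀ v : m → ℂ, A.mulVec v = (μ : ℂ) • v → P.mulVec v = v) ∧
  (∀ μ : ℝ, z < μ → ∀ v : m → ℂ, A.mulVec v = (μ : ℂ) • v → P.mulVec v = 0)


section AuxiliaryLemmas

/-! ### Auxiliary lemmas for the proof of `block_one_local_truncation_bound` -/

/-- An abstract Hilbert-space bound: if `S = P (∑ᵢ Bᵢ Qᵢ + Qᵢ Cᵢ) P` with `P` a selfadjoint
contraction, `Qᵢ` selfadjoint with `∑ᵢ ‖Qᵢ P v‖² ≤ z ‖v‖²`, and `‖Bᵢ‖, ‖Cᵢ‖ ≤ 2`, then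
`‖S‖ ≤ 4 √(card ι * z)`. -/
theorem aux_abstract_bound {H : Type*} [NormedAddCommGroup H] [InnerProductSpace ℂ H]
    [CompleteSpace H] {ι : Type*} [Fintype ι] (z : ℝ) (hz : 0 ≤ z)
    (P : H →L[ℂ] H) (hPsa : IsSelfAdjoint P) (hPc : ∀ v, ‖P v‖ ≤ ‖v‖)
    (Q B C : ι → H →L[ℂ] H)
    (hQsa : ∀ i, IsSelfAdjoint (Q i))
    (hQ : ∀ v : H, ∑ i, ‖Q i (P v)‖ ^ 2 ≤ z * ‖v‖ ^ 2)
    (hB : ∀ i, ‖B i‖ ≤ 2) (hC : ∀ i, ‖C i‖ ≤ 2)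
    (S : H →L[ℂ] H)
    (hS : S = P ∘L (∑ i, (B i ∘L Q i + Q i ∘L C i)) ∘L P) :
    ‖S‖ ≤ 4 * Real.sqrt (Fintype.card ι * z) := by
  open ContinuousLinearMap in
  set n : ℝ := (Fintype.card ι : ℝ) with hn
  have hn0 : 0 ≤ n := by positivity
  have key : ∀ v w : H, ‖(inner ℂ w (S v) : ℂ)‖ ≤ 4 * Real.sqrt (n * z) * (‖w‖ * ‖v‖) := by
    intro v w
    have hexp : (inner ℂ w (S v) : ℂ)
        = ∑ i, ((inner ℂ ((adjoint (B i)) (P w)) ((Q i) (P v)) : ℂ)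
            + (inner ℂ ((Q i) (P w)) ((C i) (P v)) : ℂ)) := by
      have h1 : S v = P ((∑ i, (B i ∘L Q i + Q i ∘L C i)) (P v)) := by rw [hS]; rfl
      rw [h1, ← ContinuousLinearMap.adjoint_inner_left P, hPsa.adjoint_eq]
      rw [ContinuousLinearMap.sum_apply, inner_sum]
      refine Finset.sum_congr rfl fun i _ => ?_
      rw [ContinuousLinearMap.add_apply, inner_add_right]
      congr 1
      · exact (ContinuousLinearMap.adjoint_inner_left (B i) ((Q i) (P v)) (P w)).symm
      · have hq : (Q i) (P w) = (adjoint (Q i)) (P w) := by rw [(hQsa i).adjoint_eq]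
        rw [hq]
        exact (ContinuousLinearMap.adjoint_inner_left (Q i) ((C i) (P v)) (P w)).symm
    have hbd1 : ∑ i, ‖(adjoint (B i)) (P w)‖ ^ 2 ≤ 4 * n * ‖w‖ ^ 2 := by
      calc ∑ i, ‖(adjoint (B i)) (P w)‖ ^ 2 ≤ ∑ _i : ι, (2 * ‖w‖) ^ 2 := by
            refine Finset.sum_le_sum fun i _ => ?_
            refine pow_le_pow_left₀ (norm_nonneg _) (((adjoint (B i)).le_opNorm (P w)).trans ?_) 2
            rw [ContinuousLinearMap.adjoint.norm_map]
            exact mul_le_mul (hB i) (hPc w) (norm_nonneg _) (by norm_num)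
        _ = 4 * n * ‖w‖ ^ 2 := by
            rw [Finset.sum_const, Finset.card_univ, nsmul_eq_mul]; ring
    have hbd1' : ∑ i, ‖(C i) (P v)‖ ^ 2 ≤ 4 * n * ‖v‖ ^ 2 := by
      calc ∑ i, ‖(C i) (P v)‖ ^ 2 ≤ ∑ _i : ι, (2 * ‖v‖) ^ 2 := by
            refine Finset.sum_le_sum fun i _ => ?_
            refine pow_le_pow_left₀ (norm_nonneg _) (((C i).le_opNorm (P v)).trans ?_) 2
            exact mul_le_mul (hC i) (hPc v) (norm_nonneg _) (by norm_num)
        _ = 4 * n * ‖v‖ ^ 2 := by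
            rw [Finset.sum_const, Finset.card_univ, nsmul_eq_mul]; ring
    have cs1 : ∑ i, ‖(adjoint (B i)) (P w)‖ * ‖(Q i) (P v)‖
        ≤ Real.sqrt (4 * n * ‖w‖ ^ 2) * Real.sqrt (z * ‖v‖ ^ 2) := by
      refine (Real.sum_mul_le_sqrt_mul_sqrt _ _ _).trans ?_
      gcongr <;> first | exact hbd1 | exact hQ v
    have cs2 : ∑ i, ‖(Q i) (P w)‖ * ‖(C i) (P v)‖
        ≤ Real.sqrt (z * ‖w‖ ^ 2) * Real.sqrt (4 * n * ‖v‖ ^ 2) := by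
      refine (Real.sum_mul_le_sqrt_mul_sqrt _ _ _).trans ?_
      gcongr <;> first | exact hQ w | exact hbd1'
    have sqrt_eq : ∀ c : ℝ, Real.sqrt (4 * n * c ^ 2) = 2 * Real.sqrt n * |c| := by
      intro c
      rw [show 4 * n * c ^ 2 = (2:ℝ)^2 * n * c^2 by ring]
      rw [Real.sqrt_mul (by positivity), Real.sqrt_mul (by positivity), Real.sqrt_sq (by norm_num),
        Real.sqrt_sq_eq_abs]
    have sqrt_eq2 : ∀ c : ℝ, Real.sqrt (z * c ^ 2) = Real.sqrt z * |c| := by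
      intro c
      rw [Real.sqrt_mul hz, Real.sqrt_sq_eq_abs]
    calc ‖(inner ℂ w (S v) : ℂ)‖
        ≤ ∑ i, (‖(adjoint (B i)) (P w)‖ * ‖(Q i) (P v)‖ + ‖(Q i) (P w)‖ * ‖(C i) (P v)‖) := by
          rw [hexp]
          refine (norm_sum_le _ _).trans (Finset.sum_le_sum fun i _ => ?_)
          exact (norm_add_le _ _).trans
            (add_le_add (norm_inner_le_norm _ _) (norm_inner_le_norm _ _))
      _ = (∑ i, ‖(adjoint (B i)) (P w)‖ * ‖(Q i) (P v)‖)
          + ∑ i, ‖(Q i) (P w)‖ * ‖(C i) (P v)‖ := Finset.sum_add_distrib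
      _ ≤ Real.sqrt (4 * n * ‖w‖ ^ 2) * Real.sqrt (z * ‖v‖ ^ 2)
          + Real.sqrt (z * ‖w‖ ^ 2) * Real.sqrt (4 * n * ‖v‖ ^ 2) := add_le_add cs1 cs2
      _ = 4 * (Real.sqrt n * Real.sqrt z) * (‖w‖ * ‖v‖) := by
          rw [sqrt_eq, sqrt_eq, sqrt_eq2, sqrt_eq2, abs_of_nonneg (norm_nonneg w),
            abs_of_nonneg (norm_nonneg v)]
          ring
      _ = 4 * Real.sqrt (n * z) * (‖w‖ * ‖v‖) := by rw [Real.sqrt_mul hn0]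
  refine ContinuousLinearMap.opNorm_le_bound _ (by positivity) fun v => ?_
  rcases eq_or_lt_of_le (norm_nonneg (S v)) with h0 | h0
  · rw [← h0]; positivity
  · have h1 : ‖S v‖ ^ 2 ≤ 4 * Real.sqrt (n * z) * (‖S v‖ * ‖v‖) := by
      calc ‖S v‖ ^ 2 = RCLike.re (inner ℂ (S v) (S v) : ℂ) := norm_sq_eq_re_inner _
        _ ≤ ‖(inner ℂ (S v) (S v) : ℂ)‖ := RCLike.re_le_norm _
        _ ≤ _ := key v (S v)
    nlinarith [h0]

section SiteOpHelpers

variable {L : Type*} [Fintype L] [DecidableEq L] {d : ℕ}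

/-- Reconstruct a configuration from its restriction off `i` and its value at `i`. -/
def mergeAt (i : L) (r : {j : L // j ≠ i} → Fin d) (a : Fin d) : Config L d :=
  fun j => if h : j = i then a else r ⟨j, h⟩

@[simp] lemma mergeAt_same (i : L) (r : {j : L // j ≠ i} → Fin d) (a : Fin d) :
    mergeAt i r a i = a := dif_pos rfl

lemma mergeAt_ne (i : L) (r : {j : L // j ≠ i} → Fin d) (a : Fin d) {j : L} (h : j ≠ i) :
    mergeAt i r a j = r ⟨j, h⟩ := dif_neg h

/-- Splitting a configuration into its restriction off `i` and its value at `i`. -/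
def splitAt (i : L) : Config L d ≃ ({j : L // j ≠ i} → Fin d) × Fin d where
  toFun x := (fun j => x j.1, x i)
  invFun p := mergeAt i p.1 p.2
  left_inv x := by
    funext j
    by_cases h : j = i
    · subst h; simp [mergeAt]
    · simp [mergeAt, h]
  right_inv p := by
    refine Prod.ext ?_ (by simp)
    funext j
    exact mergeAt_ne i p.1 p.2 j.2

lemma update_mergeAt (i : L) (r : {j : L // j ≠ i} → Fin d) (t a : Fin d) :
    Function.update (mergeAt i r t) i a = mergeAt i r a := by
  funext j
  by_cases h : j = i
  · subst h; simp
  · rw [Function.update_of_ne h, mergeAt_ne i r t h, mergeAt_ne i r a h]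

lemma mergeAt_restrict (i : L) (x : Config L d) (a : Fin d) :
    mergeAt i (fun j => x j.1) a = Function.update x i a := by
  funext j
  by_cases h : j = i
  · subst h; simp
  · rw [Function.update_of_ne h, mergeAt_ne i _ a h]

lemma sum_config_eq (i : L) {α : Type*} [AddCommMonoid α] (f : Config L d → α) :
    ∑ x, f x = ∑ r : {j : L // j ≠ i} → Fin d, ∑ a : Fin d, f (mergeAt i r a) := by
  rw [← Equiv.sum_comp (splitAt i).symm f, Fintype.sum_prod_type]
  rfl

lemma siteOp_mulVec (i : L) (m : Matrix (Fin d) (Fin d) ℂ) (v : Config L d → ℂ)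
    (x : Config L d) :
    (siteOp i m *ᵥ v) x = ∑ a, m (x i) a * v (Function.update x i a) := by
  have hcond : ∀ (r : {j : L // j ≠ i} → Fin d) (a : Fin d),
      (∀ j, j ≠ i → x j = mergeAt i r a j) ↔ (fun j : {j : L // j ≠ i} => x j.1) = r := by
    intro r a
    constructor
    · intro h; funext j; rw [← mergeAt_ne i r a j.2, ← h j.1 j.2]
    · rintro rfl j hj; rw [mergeAt_ne i _ a hj]
  show ∑ y, siteOp i m x y * v y = _
  rw [sum_config_eq i (fun y => siteOp i m x y * v y)]
  rw [Finset.sum_comm]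
  simp only [siteOp, hcond, mergeAt_same]
  calc ∑ a : Fin d, ∑ r : {j : L // j ≠ i} → Fin d,
        (if (fun j : {j : L // j ≠ i} => x j.1) = r then m (x i) a else 0) * v (mergeAt i r a)
      = ∑ a : Fin d, ∑ r : {j : L // j ≠ i} → Fin d,
        (if (fun j : {j : L // j ≠ i} => x j.1) = r
          then m (x i) a * v (mergeAt i r a) else 0) := by
        refine Finset.sum_congr rfl fun a _ => Finset.sum_congr rfl fun r _ => ?_
        rw [ite_mul, zero_mul]
    _ = ∑ a : Fin d, m (x i) a * v (mergeAt i (fun j : {j : L // j ≠ i} => x j.1) a) := by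
        refine Finset.sum_congr rfl fun a _ => ?_
        rw [Finset.sum_ite_eq]
        simp
    _ = _ := by
        refine Finset.sum_congr rfl fun a _ => ?_
        rw [mergeAt_restrict]

lemma matrix_ext_mulVec {n : Type*} [Fintype n] [DecidableEq n] {M N : Matrix n n ℂ}
    (h : ∀ v, M *ᵥ v = N *ᵥ v) : M = N := by
  ext x y
  have := congrFun (h (Pi.single y 1)) x
  simpa [Matrix.mulVec_single] using this

lemma siteOp_one (i : L) : siteOp i (1 : Matrix (Fin d) (Fin d) ℂ) = 1 := by
  refine matrix_ext_mulVec fun v => ?_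
  funext x
  rw [siteOp_mulVec, Matrix.one_mulVec]
  simp only [Matrix.one_apply, ite_mul, one_mul, zero_mul]
  rw [Finset.sum_ite_eq]
  simp

lemma siteOp_mul (i : L) (m m' : Matrix (Fin d) (Fin d) ℂ) :
    siteOp i m * siteOp i m' = siteOp i (m * m') := by
  refine matrix_ext_mulVec fun v => ?_
  funext x
  rw [← Matrix.mulVec_mulVec, siteOp_mulVec, siteOp_mulVec]
  simp only [siteOp_mulVec, Function.update_self, Function.update_idem, Matrix.mul_apply,
    Finset.sum_mul, Finset.mul_sum, mul_assoc]
  rw [Finset.sum_comm]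

lemma siteOp_conjTranspose (i : L) (m : Matrix (Fin d) (Fin d) ℂ) :
    (siteOp i m)ᴴ = siteOp i mᴴ := by
  ext x y
  simp only [Matrix.conjTranspose_apply, siteOp]
  by_cases h : ∀ j, j ≠ i → x j = y j
  · have h' : ∀ j, j ≠ i → y j = x j := fun j hj => (h j hj).symm
    rw [if_pos h', if_pos h]
  · have h' : ¬ ∀ j, j ≠ i → y j = x j := fun hc => h fun j hj => (hc j hj).symm
    rw [if_neg h', if_neg h, star_zero]

lemma siteOp_sub (i : L) (m m' : Matrix (Fin d) (Fin d) ℂ) :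
    siteOp i (m - m') = siteOp i m - siteOp i m' := by
  ext x y
  simp only [siteOp, Matrix.sub_apply]
  split <;> simp

lemma siteOp_add (i : L) (m m' : Matrix (Fin d) (Fin d) ℂ) :
    siteOp i (m + m') = siteOp i m + siteOp i m' := by
  ext x y
  simp only [siteOp, Matrix.add_apply]
  split <;> simp

lemma siteOp_smul (i : L) (c : ℂ) (m : Matrix (Fin d) (Fin d) ℂ) :
    siteOp i (c • m) = c • siteOp i m := by
  ext x y
  simp only [siteOp, Matrix.smul_apply, smul_eq_mul]
  split <;> simp

end SiteOpHelpers

section NormHelpers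

variable {n : Type*} [Fintype n] [DecidableEq n]

lemma l2_norm_sq (x : EuclideanSpace ℂ n) : ‖x‖ ^ 2 = ∑ i, ‖x i‖ ^ 2 := by
  rw [EuclideanSpace.norm_eq, Real.sq_sqrt (by positivity)]

lemma inner_euclidean (x y : EuclideanSpace ℂ n) :
    (inner ℂ x y : ℂ) = star (⇑x) ⬝ᵥ (⇑y) := by
  rw [PiLp.inner_apply]
  simp only [RCLike.inner_apply', dotProduct]
  rfl

lemma mulVec_l2_bound (m : Matrix n n ℂ) (w : n → ℂ) :
    ∑ t, ‖(m *ᵥ w) t‖ ^ 2 ≤ opNorm m ^ 2 * ∑ a, ‖w a‖ ^ 2 := by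
  set X : EuclideanSpace ℂ n := (WithLp.equiv 2 _).symm w with hX
  have h := (Matrix.toEuclideanCLM (𝕜 := ℂ) m).le_opNorm X
  have h2 : ‖Matrix.toEuclideanCLM (𝕜 := ℂ) m X‖ ^ 2 ≤ (opNorm m * ‖X‖) ^ 2 :=
    pow_le_pow_left₀ (norm_nonneg _) h 2
  rw [l2_norm_sq, mul_pow, l2_norm_sq] at h2
  calc ∑ t, ‖(m *ᵥ w) t‖ ^ 2
      = ∑ t, ‖(Matrix.toEuclideanCLM (𝕜 := ℂ) m X) t‖ ^ 2 := rfl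
    _ ≤ opNorm m ^ 2 * ∑ a, ‖X a‖ ^ 2 := h2
    _ = opNorm m ^ 2 * ∑ a, ‖w a‖ ^ 2 := rfl

lemma toCLM_isSelfAdjoint (M : Matrix n n ℂ) (h : M.IsHermitian) :
    _root_.IsSelfAdjoint (Matrix.toEuclideanCLM (𝕜 := ℂ) M) := by
  have h1 : star M = M := h
  show star _ = _
  rw [← map_star, h1]

lemma toCLM_inner_left (M : Matrix n n ℂ) (h : M.IsHermitian) (x y : EuclideanSpace ℂ n) :
    (inner ℂ (Matrix.toEuclideanCLM (𝕜 := ℂ) M x) y : ℂ)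
      = inner ℂ x (Matrix.toEuclideanCLM (𝕜 := ℂ) M y) := by
  have hsa := toCLM_isSelfAdjoint M h
  calc (inner ℂ (Matrix.toEuclideanCLM (𝕜 := ℂ) M x) y : ℂ)
      = inner ℂ (ContinuousLinearMap.adjoint (Matrix.toEuclideanCLM (𝕜 := ℂ) M) x) y := by
        rw [hsa.adjoint_eq]
    _ = inner ℂ x (Matrix.toEuclideanCLM (𝕜 := ℂ) M y) :=
        ContinuousLinearMap.adjoint_inner_left _ _ _

lemma proj_contraction {P : Matrix n n ℂ} (hh : P.IsHermitian) (hi : P * P = P)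
    (v : EuclideanSpace ℂ n) : ‖Matrix.toEuclideanCLM (𝕜 := ℂ) P v‖ ≤ ‖v‖ := by
  set T := Matrix.toEuclideanCLM (𝕜 := ℂ) P with hT
  have hTT : T (T v) = T v := by
    rw [← ContinuousLinearMap.mul_apply, hT, ← _root_.map_mul, hi]
  have e1 : (inner ℂ (T v) (T v) : ℂ) = inner ℂ v (T (T v)) := toCLM_inner_left P hh v (T v)
  have h1 : ‖T v‖ ^ 2 ≤ ‖v‖ * ‖T v‖ := by
    calc ‖T v‖ ^ 2 = RCLike.re (inner ℂ (T v) (T v) : ℂ) := norm_sq_eq_re_inner _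
      _ = RCLike.re (inner ℂ v (T v) : ℂ) := by rw [e1, hTT]
      _ ≤ ‖(inner ℂ v (T v) : ℂ)‖ := RCLike.re_le_norm _
      _ ≤ ‖v‖ * ‖T v‖ := norm_inner_le_norm _ _
  rcases eq_or_lt_of_le (norm_nonneg (T v)) with h0 | h0
  · rw [← h0]; exact norm_nonneg v
  · nlinarith

lemma opNorm_proj_le_one {P : Matrix n n ℂ} (hh : P.IsHermitian) (hi : P * P = P) :
    opNorm P ≤ 1 := by
  refine ContinuousLinearMap.opNorm_le_bound _ (by norm_num) fun v => ?_
  rw [one_mul]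
  exact proj_contraction hh hi v

lemma opNorm_siteOp_le {L : Type*} [Fintype L] [DecidableEq L] {d : ℕ}
    (i : L) (m : Matrix (Fin d) (Fin d) ℂ) :
    opNorm (siteOp i m) ≤ opNorm m := by
  refine ContinuousLinearMap.opNorm_le_bound _ (norm_nonneg _) fun x => ?_
  have key : ∀ r : {j : L // j ≠ i} → Fin d, ∀ t : Fin d,
      (siteOp i m *ᵥ ⇑x) (mergeAt i r t) = (m *ᵥ fun a => x (mergeAt i r a)) t := by
    intro r t
    rw [siteOp_mulVec]
    simp only [mergeAt_same]
    refine Finset.sum_congr rfl fun a _ => ?_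
    rw [update_mergeAt]
  have h1 : ‖Matrix.toEuclideanCLM (𝕜 := ℂ) (siteOp i m) x‖ ^ 2 ≤ (opNorm m * ‖x‖) ^ 2 := by
    rw [l2_norm_sq, mul_pow, l2_norm_sq, Finset.mul_sum]
    calc ∑ y, ‖(Matrix.toEuclideanCLM (𝕜 := ℂ) (siteOp i m) x) y‖ ^ 2
        = ∑ y, ‖(siteOp i m *ᵥ ⇑x) y‖ ^ 2 := rfl
      _ = ∑ r : {j : L // j ≠ i} → Fin d, ∑ t : Fin d,
            ‖(siteOp i m *ᵥ ⇑x) (mergeAt i r t)‖ ^ 2 :=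
          sum_config_eq i _
      _ ≤ ∑ r : {j : L // j ≠ i} → Fin d, opNorm m ^ 2 * ∑ a, ‖x (mergeAt i r a)‖ ^ 2 := by
          refine Finset.sum_le_sum fun r _ => ?_
          calc ∑ t, ‖(siteOp i m *ᵥ ⇑x) (mergeAt i r t)‖ ^ 2
              = ∑ t, ‖(m *ᵥ fun a => x (mergeAt i r a)) t‖ ^ 2 := by
                refine Finset.sum_congr rfl fun t _ => ?_
                rw [key r t]
            _ ≤ _ := mulVec_l2_bound m _
      _ = ∑ y, opNorm m ^ 2 * ‖x y‖ ^ 2 := by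
          rw [sum_config_eq i (fun y => opNorm m ^ 2 * ‖x y‖ ^ 2)]
          refine Finset.sum_congr rfl fun r _ => by rw [Finset.mul_sum]
  have h2 := Real.sqrt_le_sqrt h1
  have hnn : (0:ℝ) ≤ opNorm m * ‖x‖ := mul_nonneg (norm_nonneg _) (norm_nonneg _)
  rwa [Real.sqrt_sq (norm_nonneg _), Real.sqrt_sq hnn] at h2

lemma opNorm_mul_le (X Y : Matrix n n ℂ) : opNorm (X * Y) ≤ opNorm X * opNorm Y := by
  show ‖Matrix.toEuclideanCLM (𝕜 := ℂ) (X * Y)‖ ≤ _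
  rw [_root_.map_mul]
  exact norm_mul_le _ _

lemma projMat_conjTranspose {d : ℕ} (e : Fin d → ℂ) : (projMat e)ᴴ = projMat e := by
  ext a b
  simp [projMat, Matrix.vecMulVec_apply, Matrix.conjTranspose_apply, mul_comm]

lemma projMat_mul_projMat {d : ℕ} (e : Fin d → ℂ) (he : star e ⬝ᵥ e = 1) :
    projMat e * projMat e = projMat e := by
  have hsum : ∑ c, star (e c) * e c = 1 := by simpa [dotProduct] using he
  ext a b
  rw [Matrix.mul_apply]
  simp only [projMat, Matrix.vecMulVec_apply, Pi.star_apply]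
  have : ∀ c, e a * star (e c) * (e c * star (e b))
      = (star (e c) * e c) * (e a * star (e b)) := fun c => by ring
  simp_rw [this]
  rw [← Finset.sum_mul, hsum, one_mul]

lemma projMat_conj {d : ℕ} (e : Fin d → ℂ) (X : Matrix (Fin d) (Fin d) ℂ) :
    projMat e * X * projMat e = (star e ⬝ᵥ (X *ᵥ e)) • projMat e := by
  ext a b
  rw [Matrix.mul_apply]
  simp only [projMat, Matrix.vecMulVec_apply, Pi.star_apply, Matrix.smul_apply, smul_eq_mul,
    Matrix.mul_apply, dotProduct, Matrix.mulVec, Finset.sum_mul, Finset.mul_sum]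
  rw [Finset.sum_comm]
  refine Finset.sum_congr rfl fun c _ => ?_
  refine Finset.sum_congr rfl fun c' _ => ?_
  ring

lemma spectral_bound (M P : Matrix n n ℂ) (hMh : M.IsHermitian) (z : ℝ)
    (hP : IsSpectralProjLE M P z) (v : EuclideanSpace ℂ n) :
    Complex.re (inner ℂ (Matrix.toEuclideanCLM (𝕜 := ℂ) P v)
      (Matrix.toEuclideanCLM (𝕜 := ℂ) M (Matrix.toEuclideanCLM (𝕜 := ℂ) P v)) : ℂ)
      ≤ z * ‖Matrix.toEuclideanCLM (𝕜 := ℂ) P v‖ ^ 2 := by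
  set y := Matrix.toEuclideanCLM (𝕜 := ℂ) P v with hy
  set b := hMh.eigenvectorBasis with hb
  set lam := hMh.eigenvalues with hlam
  have hPh : P.IsHermitian := hP.1
  have heig : ∀ k, Matrix.toEuclideanCLM (𝕜 := ℂ) M (b k) = (lam k : ℂ) • (b k) := by
    intro k
    have h1 : M *ᵥ ⇑(b k) = (lam k) • ⇑(b k) := hMh.mulVec_eigenvectorBasis k
    ext j
    have := congrFun h1 j
    rw [Pi.smul_apply] at this
    show (M *ᵥ ⇑(b k)) j = _
    rw [this]
    simp [Complex.real_smul]
  have hker : ∀ k, z < lam k → b.repr y k = 0 := by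
    intro k hk
    have h0 : Matrix.toEuclideanCLM (𝕜 := ℂ) P (b k) = 0 := by
      have heq : M *ᵥ ⇑(b k) = ((lam k : ℝ) : ℂ) • ⇑(b k) := by
        have h1 : M *ᵥ ⇑(b k) = (lam k) • ⇑(b k) := hMh.mulVec_eigenvectorBasis k
        funext j
        rw [h1]
        simp [Complex.real_smul]
      have := hP.2.2.2 (lam k) hk ⇑(b k) heq
      ext j
      show (P *ᵥ ⇑(b k)) j = 0
      rw [this]
      rfl
    rw [OrthonormalBasis.repr_apply_apply, hy, ← toCLM_inner_left P hPh, h0]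
    simp
  have hrepr : ∀ k, b.repr (Matrix.toEuclideanCLM (𝕜 := ℂ) M y) k
      = (lam k : ℂ) * b.repr y k := by
    intro k
    rw [OrthonormalBasis.repr_apply_apply, OrthonormalBasis.repr_apply_apply,
      ← toCLM_inner_left M hMh, heig k, inner_smul_left]
    simp [Complex.conj_ofReal]
  have hinner : (inner ℂ y (Matrix.toEuclideanCLM (𝕜 := ℂ) M y) : ℂ)
      = ∑ k, (starRingEnd ℂ) (b.repr y k) * ((lam k : ℂ) * b.repr y k) := by
    rw [← b.repr.inner_map_map y (Matrix.toEuclideanCLM (𝕜 := ℂ) M y), PiLp.inner_apply]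
    refine Finset.sum_congr rfl fun k _ => ?_
    rw [hrepr k]
    exact RCLike.inner_apply' _ _
  have hnorm : ‖y‖ ^ 2 = ∑ k, ‖b.repr y k‖ ^ 2 := by
    rw [← b.repr.norm_map y, EuclideanSpace.norm_eq, Real.sq_sqrt (by positivity)]
  rw [hinner, hnorm, Complex.re_sum, Finset.mul_sum]
  refine Finset.sum_le_sum fun k _ => ?_
  have hterm : Complex.re ((starRingEnd ℂ) (b.repr y k) * ((lam k : ℂ) * b.repr y k))
      = lam k * ‖b.repr y k‖ ^ 2 := by
    have : (starRingEnd ℂ) (b.repr y k) * ((lam k : ℂ) * b.repr y k)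
        = (lam k : ℂ) * ((starRingEnd ℂ) (b.repr y k) * b.repr y k) := by ring
    rw [this, Complex.conj_mul', ← Complex.ofReal_pow, ← Complex.ofReal_mul,
      Complex.ofReal_re]
  rw [hterm]
  rcases le_or_gt (lam k) z with h | h
  · have := sq_nonneg ‖b.repr y k‖
    nlinarith
  · rw [hker k h]
    simp

end NormHelpers

end AuxiliaryLemmas


/-- **Mean-field truncation of a 1-local 1-extensive block operator.**
On a block `L` of qudits with reference unit vectors `e i`, let `Q_i := 1 − |e_i⟩⟨e_i|` at site
`i`, `M_L := ∑_i Q_i`, and let `Π_{≤z}` be the spectral projection of `M_L` onto eigenvalues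
`≤ z`.  Let `A = ∑_i a_i` with each `a_i` Hermitian, supported on `{i}` (realized as the single
site `d × d` matrix `a i`), of norm at most `1`, and let `ε_A := ∑_i ⟨e_i, a_i e_i⟩`.  Then
`‖Π_{≤z}(A − ε_A·1)Π_{≤z}‖ ≤ 4√(|L|·z)`. -/
theorem block_one_local_truncation_bound
    {L : Type*} [Fintype L] [DecidableEq L] (d : ℕ) (hd : 2 ≤ d)
    (e : L → (Fin d → ℂ)) (he : ∀ i, star (e i) ⬝ᵥ e i = 1)
    (z : ℝ) (hz : 0 ≤ z)
    (M : Op L d) (hM : M = ∑ i, ((1 : Op L d) - siteOp i (projMat (e i))))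
    (P : Op L d) (hP : IsSpectralProjLE M P z)
    (a : L → Matrix (Fin d) (Fin d) ℂ)
    (haherm : ∀ i, (a i).IsHermitian) (hanorm : ∀ i, opNorm (a i) ≤ 1)
    (A : Op L d) (hA : A = ∑ i, siteOp i (a i))
    (εA : ℂ) (hεA : εA = ∑ i, star (e i) ⬝ᵥ (a i).mulVec (e i)) :
    opNorm (P * (A - εA • (1 : Op L d)) * P) ≤ 4 * Real.sqrt (Fintype.card L * z) := by
  classical
  -- basic facts about the single-site projections
  have hpmh : ∀ i : L, (projMat (e i)).IsHermitian := fun i => projMat_conjTranspose (e i)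
  have hpmi : ∀ i : L, projMat (e i) * projMat (e i) = projMat (e i) :=
    fun i => projMat_mul_projMat (e i) (he i)
  have hqq : ∀ i : L, (1 - projMat (e i)) * (1 - projMat (e i)) = 1 - projMat (e i) := by
    intro i
    rw [sub_mul, one_mul, mul_sub, mul_one, hpmi i, sub_self, sub_zero]
  have hQherm : ∀ i : L, (siteOp i (1 - projMat (e i)) : Op L d).IsHermitian := by
    intro i
    show _ᴴ = _
    rw [siteOp_conjTranspose, Matrix.conjTranspose_sub, Matrix.conjTranspose_one, hpmh i]
  have hQidem : ∀ i : L, (siteOp i (1 - projMat (e i)) : Op L d)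
      * siteOp i (1 - projMat (e i)) = siteOp i (1 - projMat (e i)) := by
    intro i
    rw [siteOp_mul, hqq i]
  have hMQ : M = ∑ i, siteOp i (1 - projMat (e i)) := by
    rw [hM]
    refine Finset.sum_congr rfl fun i _ => ?_
    rw [siteOp_sub, siteOp_one]
  have hMherm : M.IsHermitian := by
    show Mᴴ = M
    rw [hMQ, Matrix.conjTranspose_sum]
    exact Finset.sum_congr rfl fun i _ => hQherm i
  -- the shifted single-site operators have vanishing mean-field expectation
  have hzero : ∀ i : L, projMat (e i)
      * (a i - (star (e i) ⬝ᵥ (a i).mulVec (e i)) • 1) * projMat (e i) = 0 := by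
    intro i
    rw [projMat_conj]
    have h0 : star (e i) ⬝ᵥ ((a i - (star (e i) ⬝ᵥ (a i).mulVec (e i)) • 1) *ᵥ e i) = 0 := by
      rw [Matrix.sub_mulVec, Matrix.smul_mulVec, Matrix.one_mulVec,
        dotProduct_sub, dotProduct_smul, he i, smul_eq_mul, mul_one]
      exact sub_self _
    rw [h0, zero_smul]
  have hsplit : ∀ i : L, (a i - (star (e i) ⬝ᵥ (a i).mulVec (e i)) • 1)
      = projMat (e i) * (a i - (star (e i) ⬝ᵥ (a i).mulVec (e i)) • 1) * (1 - projMat (e i))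
        + (1 - projMat (e i)) * (a i - (star (e i) ⬝ᵥ (a i).mulVec (e i)) • 1) := by
    intro i
    rw [mul_sub, mul_one, sub_mul, one_mul, hzero i, sub_zero]
    abel
  have hdecomp : A - εA • (1 : Op L d)
      = ∑ i, (siteOp i (projMat (e i) * (a i - (star (e i) ⬝ᵥ (a i).mulVec (e i)) • 1))
          * siteOp i (1 - projMat (e i))
        + siteOp i (1 - projMat (e i))
          * siteOp i (a i - (star (e i) ⬝ᵥ (a i).mulVec (e i)) • 1)) := by
    rw [hA, hεA, Finset.sum_smul, ← Finset.sum_sub_distrib]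
    refine Finset.sum_congr rfl fun i _ => ?_
    rw [show siteOp i (a i) - (star (e i) ⬝ᵥ (a i).mulVec (e i)) • (1 : Op L d)
        = siteOp i (a i - (star (e i) ⬝ᵥ (a i).mulVec (e i)) • 1) by
      rw [siteOp_sub, siteOp_smul, siteOp_one]]
    rw [siteOp_mul, siteOp_mul, ← siteOp_add]
    exact congrArg (siteOp i) (hsplit i)
  -- norm bound for the per-site expectation values
  have heps : ∀ i : L, ‖star (e i) ⬝ᵥ (a i).mulVec (e i)‖ ≤ 1 := by
    intro i
    have hE1 : ‖((WithLp.equiv 2 (Fin d → ℂ)).symm (e i) : EuclideanSpace ℂ (Fin d))‖ = 1 := by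
      have h2 : ‖((WithLp.equiv 2 (Fin d → ℂ)).symm (e i) : EuclideanSpace ℂ (Fin d))‖ ^ 2
          = 1 := by
        rw [@norm_sq_eq_re_inner ℂ]
        have h3 : (inner ℂ ((WithLp.equiv 2 (Fin d → ℂ)).symm (e i) : EuclideanSpace ℂ (Fin d))
            ((WithLp.equiv 2 (Fin d → ℂ)).symm (e i)) : ℂ) = 1 := by
          rw [inner_euclidean]
          exact he i
        rw [h3]
        simp
      nlinarith [norm_nonneg
        ((WithLp.equiv 2 (Fin d → ℂ)).symm (e i) : EuclideanSpace ℂ (Fin d))]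
    have h1 : (inner ℂ ((WithLp.equiv 2 (Fin d → ℂ)).symm (e i) : EuclideanSpace ℂ (Fin d))
        (Matrix.toEuclideanCLM (𝕜 := ℂ) (a i)
          ((WithLp.equiv 2 (Fin d → ℂ)).symm (e i))) : ℂ)
        = star (e i) ⬝ᵥ (a i).mulVec (e i) := (inner_euclidean _ _).trans rfl
    rw [← h1]
    have h2 := (Matrix.toEuclideanCLM (𝕜 := ℂ) (a i)).le_opNorm
      ((WithLp.equiv 2 (Fin d → ℂ)).symm (e i))
    have h3 := norm_inner_le_norm (𝕜 := ℂ)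
      ((WithLp.equiv 2 (Fin d → ℂ)).symm (e i) : EuclideanSpace ℂ (Fin d))
      (Matrix.toEuclideanCLM (𝕜 := ℂ) (a i) ((WithLp.equiv 2 (Fin d → ℂ)).symm (e i)))
    have h4 : ‖Matrix.toEuclideanCLM (𝕜 := ℂ) (a i)‖ ≤ 1 := hanorm i
    rw [hE1] at h2 h3
    rw [one_mul] at h3
    rw [mul_one] at h2
    linarith
  have ham2 : ∀ i : L, opNorm (a i - (star (e i) ⬝ᵥ (a i).mulVec (e i)) • 1) ≤ 2 := by
    intro i
    unfold opNorm
    rw [_root_.map_sub, _root_.map_smul]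
    refine (norm_sub_le _ _).trans ?_
    have h6 : ‖(star (e i) ⬝ᵥ (a i).mulVec (e i))
          • Matrix.toEuclideanCLM (𝕜 := ℂ) (1 : Matrix (Fin d) (Fin d) ℂ)‖
        ≤ ‖star (e i) ⬝ᵥ (a i).mulVec (e i)‖
          * ‖Matrix.toEuclideanCLM (𝕜 := ℂ) (1 : Matrix (Fin d) (Fin d) ℂ)‖ :=
      ContinuousLinearMap.opNorm_smul_le _ _
    have h1 : ‖Matrix.toEuclideanCLM (𝕜 := ℂ) (a i)‖ ≤ 1 := hanorm i
    have h2 : ‖Matrix.toEuclideanCLM (𝕜 := ℂ) (1 : Matrix (Fin d) (Fin d) ℂ)‖ ≤ 1 := by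
      rw [_root_.map_one, ContinuousLinearMap.one_def]
      exact ContinuousLinearMap.norm_id_le
    have h3 := heps i
    have h4 := norm_nonneg (Matrix.toEuclideanCLM (𝕜 := ℂ) (1 : Matrix (Fin d) (Fin d) ℂ))
    have h5 := norm_nonneg (star (e i) ⬝ᵥ (a i).mulVec (e i))
    nlinarith
  -- pass to continuous linear maps and apply the abstract bound
  unfold opNorm
  refine aux_abstract_bound z hz (Matrix.toEuclideanCLM (𝕜 := ℂ) P)
    (toCLM_isSelfAdjoint P hP.1) (fun v => proj_contraction hP.1 hP.2.1 v)
    (fun i => Matrix.toEuclideanCLM (𝕜 := ℂ) (siteOp i (1 - projMat (e i))))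
    (fun i => Matrix.toEuclideanCLM (𝕜 := ℂ)
      (siteOp i (projMat (e i) * (a i - (star (e i) ⬝ᵥ (a i).mulVec (e i)) • 1))))
    (fun i => Matrix.toEuclideanCLM (𝕜 := ℂ)
      (siteOp i (a i - (star (e i) ⬝ᵥ (a i).mulVec (e i)) • 1)))
    (fun i => toCLM_isSelfAdjoint _ (hQherm i)) ?_ ?_ ?_ _ ?_
  · -- the key spectral estimate
    intro v
    have hsq : ∀ i : L,
        ‖Matrix.toEuclideanCLM (𝕜 := ℂ) (siteOp i (1 - projMat (e i)))
          (Matrix.toEuclideanCLM (𝕜 := ℂ) P v)‖ ^ 2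
        = Complex.re (inner ℂ (Matrix.toEuclideanCLM (𝕜 := ℂ) P v)
            (Matrix.toEuclideanCLM (𝕜 := ℂ) (siteOp i (1 - projMat (e i)))
              (Matrix.toEuclideanCLM (𝕜 := ℂ) P v)) : ℂ) := by
      intro i
      set y := Matrix.toEuclideanCLM (𝕜 := ℂ) P v with hy
      set Ti := Matrix.toEuclideanCLM (𝕜 := ℂ) (siteOp i (1 - projMat (e i))) with hTi
      have hTT : Ti (Ti y) = Ti y := by
        rw [← ContinuousLinearMap.mul_apply, hTi, ← _root_.map_mul, hQidem i]
      have e1 : (inner ℂ (Ti y) (Ti y) : ℂ) = inner ℂ y (Ti (Ti y)) :=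
        toCLM_inner_left _ (hQherm i) y (Ti y)
      rw [@norm_sq_eq_re_inner ℂ, e1, hTT]
      rfl
    have hsum : ∑ i, ‖Matrix.toEuclideanCLM (𝕜 := ℂ) (siteOp i (1 - projMat (e i)))
          (Matrix.toEuclideanCLM (𝕜 := ℂ) P v)‖ ^ 2
        = Complex.re (inner ℂ (Matrix.toEuclideanCLM (𝕜 := ℂ) P v)
            (Matrix.toEuclideanCLM (𝕜 := ℂ) M (Matrix.toEuclideanCLM (𝕜 := ℂ) P v)) : ℂ) := by
      rw [hMQ, _root_.map_sum, ContinuousLinearMap.sum_apply, inner_sum, Complex.re_sum]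
      exact Finset.sum_congr rfl fun i _ => hsq i
    rw [hsum]
    refine (spectral_bound M P hMherm z hP v).trans ?_
    have h := proj_contraction hP.1 hP.2.1 v
    have h2 : ‖Matrix.toEuclideanCLM (𝕜 := ℂ) P v‖ ^ 2 ≤ ‖v‖ ^ 2 :=
      pow_le_pow_left₀ (norm_nonneg _) h 2
    exact mul_le_mul_of_nonneg_left h2 hz
  · -- bound on the B factors
    intro i
    show opNorm (siteOp i (projMat (e i)
      * (a i - (star (e i) ⬝ᵥ (a i).mulVec (e i)) • 1))) ≤ 2
    refine (opNorm_siteOp_le _ _).trans ?_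
    refine (opNorm_mul_le _ _).trans ?_
    have h1 : opNorm (projMat (e i)) ≤ 1 := opNorm_proj_le_one (hpmh i) (hpmi i)
    have h2 := ham2 i
    have h3 : (0:ℝ) ≤ opNorm (a i - (star (e i) ⬝ᵥ (a i).mulVec (e i)) • 1) := norm_nonneg _
    nlinarith
  · -- bound on the C factors
    intro i
    show opNorm (siteOp i (a i - (star (e i) ⬝ᵥ (a i).mulVec (e i)) • 1)) ≤ 2
    exact (opNorm_siteOp_le _ _).trans (ham2 i)
  · -- the operator identity
    have hX : Matrix.toEuclideanCLM (𝕜 := ℂ) (A - εA • (1 : Op L d))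
        = ∑ i, (Matrix.toEuclideanCLM (𝕜 := ℂ)
            (siteOp i (projMat (e i) * (a i - (star (e i) ⬝ᵥ (a i).mulVec (e i)) • 1)))
              ∘L Matrix.toEuclideanCLM (𝕜 := ℂ) (siteOp i (1 - projMat (e i)))
          + Matrix.toEuclideanCLM (𝕜 := ℂ) (siteOp i (1 - projMat (e i)))
              ∘L Matrix.toEuclideanCLM (𝕜 := ℂ)
                (siteOp i (a i - (star (e i) ⬝ᵥ (a i).mulVec (e i)) • 1))) := by
      rw [hdecomp, _root_.map_sum]
      refine Finset.sum_congr rfl fun i _ => ?_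
      rw [_root_.map_add, _root_.map_mul, _root_.map_mul,
        ContinuousLinearMap.mul_def, ContinuousLinearMap.mul_def]
    rw [_root_.map_mul, _root_.map_mul, hX, ContinuousLinearMap.mul_def,
      ContinuousLinearMap.mul_def, ContinuousLinearMap.comp_assoc]

end FullyConnected
end

section
/- Let A and B be m×n complex matrices and r ≥ 0 an integer with rank(B) ≤ r. Let σ₁(A) ≥ σ₂(A) ≥ … ≥ σ_n(A) ≥ 0 be the square roots of the eigenvalues of AᴴA arranged in nonincreasing order (the singular values of A, with multiplicity). Then ∑_{i > r} σ_i(A)² ≤ ‖A − B‖_F², where ‖M‖_F² = ∑_{i,j} |M_{ij}|² is the squared Frobenius norm. -/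
open Matrix

local notation "⟪" x ", " y "⟫" => @inner ℂ _ _ x y

private lemma eckart_young_key {n r : ℕ} (μ q : Fin n → ℝ) (hμa : Antitone μ)
    (hμ0 : ∀ i, 0 ≤ μ i) (hq0 : ∀ i, 0 ≤ q i) (hq1 : ∀ i, q i ≤ 1)
    (hqs : (n : ℝ) - r ≤ ∑ i, q i) :
    ∑ i ∈ Finset.univ.filter (fun i : Fin n => r ≤ (i : ℕ)), μ i ≤ ∑ i, μ i * q i := by
  rcases le_or_gt n r with hr | hr
  · have hemp : Finset.univ.filter (fun i : Fin n => r ≤ (i : ℕ)) = ∅ := by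
      apply Finset.filter_false_of_mem
      intro i _
      have := i.isLt
      omega
    rw [hemp]
    simp only [Finset.sum_empty]
    exact Finset.sum_nonneg fun i _ => mul_nonneg (hμ0 i) (hq0 i)
  · set t := μ ⟨r, hr⟩ with ht
    have ht0 : 0 ≤ t := hμ0 _
    set S := Finset.univ.filter (fun i : Fin n => r ≤ (i : ℕ)) with hS
    have hScard : (S.card : ℝ) = (n : ℝ) - r := by
      have h1 : S = Finset.Ici (⟨r, hr⟩ : Fin n) := by
        ext i
        simp [hS, Fin.le_def]
      rw [h1, Fin.card_Ici]
      have : r ≤ n := hr.le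
      push_cast [Nat.cast_sub this]
      ring
    have h1 : ∑ i ∈ S, (μ i - t) ≤ ∑ i, (μ i - t) * q i := by
      rw [← Finset.sum_filter_add_sum_filter_not Finset.univ
        (fun i : Fin n => r ≤ (i : ℕ)) (fun i => (μ i - t) * q i)]
      have hA : ∑ i ∈ S, (μ i - t) ≤ ∑ i ∈ S, (μ i - t) * q i := by
        apply Finset.sum_le_sum
        intro i hi
        have hri : r ≤ (i : ℕ) := (Finset.mem_filter.mp hi).2
        have hμi : μ i ≤ t := hμa (show (⟨r, hr⟩ : Fin n) ≤ i from hri)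
        nlinarith [hq1 i, hq0 i]
      have hB : (0 : ℝ) ≤ ∑ i ∈ Finset.univ.filter (fun i : Fin n => ¬ r ≤ (i : ℕ)),
          (μ i - t) * q i := by
        apply Finset.sum_nonneg
        intro i hi
        have hri : (i : ℕ) < r := by
          have := (Finset.mem_filter.mp hi).2; omega
        have hμi : t ≤ μ i := hμa (show i ≤ (⟨r, hr⟩ : Fin n) from hri.le)
        exact mul_nonneg (by linarith) (hq0 i)
      rw [← hS]
      linarith
    have h2 : ∑ i, μ i * q i = ∑ i, (μ i - t) * q i + t * ∑ i, q i := by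
      rw [Finset.mul_sum, ← Finset.sum_add_distrib]
      exact Finset.sum_congr rfl fun i _ => by ring
    have h3 : ∑ i ∈ S, (μ i - t) = ∑ i ∈ S, μ i - t * S.card := by
      rw [Finset.sum_sub_distrib, Finset.sum_const, nsmul_eq_mul]
      ring
    have h4 : t * ((n : ℝ) - r) ≤ t * ∑ i, q i := mul_le_mul_of_nonneg_left hqs ht0
    rw [h2]
    rw [h3, hScard] at h1
    linarith

private lemma parseval_sq {ι E : Type*} [Fintype ι] [NormedAddCommGroup E]
    [InnerProductSpace ℂ E] (b : OrthonormalBasis ι ℂ E) (x : E) :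
    ∑ i, ‖⟪b i, x⟫‖ ^ 2 = ‖x‖ ^ 2 := by
  have h2 := congrArg (RCLike.re (K := ℂ)) (b.sum_inner_mul_inner x x)
  rw [map_sum, inner_self_eq_norm_sq] at h2
  rw [← h2]
  exact Finset.sum_congr rfl fun i _ => by
    rw [← inner_conj_symm x (b i), RCLike.conj_mul]
    norm_cast

private lemma toEuclidean_mul {n m k : ℕ} (C : Matrix (Fin n) (Fin m) ℂ)
    (D : Matrix (Fin m) (Fin k) ℂ) (x : EuclideanSpace ℂ (Fin k)) :
    Matrix.toEuclideanLin (C * D) x = Matrix.toEuclideanLin C (Matrix.toEuclideanLin D x) := by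
  simp [Matrix.toEuclideanLin_apply, Matrix.mulVec_mulVec]

private lemma inner_toEuclidean_self {m n : ℕ} (A : Matrix (Fin m) (Fin n) ℂ)
    (x : EuclideanSpace ℂ (Fin n)) :
    ⟪x, Matrix.toEuclideanLin (Aᴴ * A) x⟫
      = ⟪Matrix.toEuclideanLin A x, Matrix.toEuclideanLin A x⟫ := by
  rw [toEuclidean_mul, Matrix.toEuclideanLin_conjTranspose_eq_adjoint,
    LinearMap.adjoint_inner_right]

/-- **Eckart–Young theorem (Frobenius norm).**  Let `A` and `B` be `m × n` complex matrices with
`rank B ≤ r`, and let `σ 0 ≥ σ 1 ≥ …` enumerate the singular values of `A` (the square roots of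
the eigenvalues of `AᴴA`, with multiplicity) in nonincreasing order; `σ i` is the `(i+1)`-st
singular value.  Then the sum of the squares of the singular values beyond the first `r` ones is
at most the squared Frobenius norm of `A − B`. -/
theorem eckart_young
    {m n : ℕ} (A B : Matrix (Fin m) (Fin n) ℂ) (r : ℕ) (hB : B.rank ≤ r)
    (hAA : (Aᴴ * A).IsHermitian)
    (σ : Fin n → ℝ) (hσanti : Antitone σ)
    (p : Equiv.Perm (Fin n)) (hσval : ∀ i, σ i = Real.sqrt (hAA.eigenvalues (p i))) :
    ∑ i ∈ Finset.univ.filter (fun i : Fin n => r ≤ (i : ℕ)), σ i ^ 2 ≤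
      ∑ i, ∑ j, ‖(A - B) i j‖ ^ 2 := by
  classical
  set M := A - B with hM
  set TB := Matrix.toEuclideanLin B with hTB
  set K := LinearMap.ker TB with hK
  set k := Module.finrank ℂ K with hkdef
  -- dimension bound on the kernel
  have hk : (n : ℝ) - r ≤ (k : ℝ) := by
    have h1 : Module.finrank ℂ (LinearMap.range TB) + k = n := by
      rw [hkdef, hK, LinearMap.finrank_range_add_finrank_ker TB, finrank_euclideanSpace_fin]
    have h2 : B.rank = Module.finrank ℂ (LinearMap.range TB) := by
      rw [Matrix.rank_eq_finrank_range_toLin B (PiLp.basisFun 2 ℂ (Fin m))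
        (PiLp.basisFun 2 ℂ (Fin n))]
      rfl
    have h5 : (B.rank : ℝ) ≤ r := Nat.cast_le.mpr hB
    have h6 : (B.rank : ℝ) + (k : ℝ) = (n : ℝ) := by
      rw [h2]; exact_mod_cast h1
    linarith
  -- orthonormal family in the kernel
  let b := stdOrthonormalBasis ℂ K
  let v : Fin k → EuclideanSpace ℂ (Fin n) := fun j => ((b j : K) : EuclideanSpace ℂ (Fin n))
  have hv : Orthonormal ℂ v := b.orthonormal.comp_linearIsometry K.subtypeₗᵢ
  -- eigen data
  let u := hAA.eigenvectorBasis
  let lam := hAA.eigenvalues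
  have hlam0 : ∀ i, 0 ≤ lam i := fun i =>
    Matrix.eigenvalues_conjTranspose_mul_self_nonneg A i
  have huH : ∀ i, Matrix.toEuclideanLin (Aᴴ * A) (u i) = ((lam i : ℝ) : ℂ) • u i := by
    intro i
    have h := hAA.mulVec_eigenvectorBasis i
    rw [Matrix.toEuclideanLin_apply]
    apply (WithLp.equiv 2 _).injective
    rw [RCLike.real_smul_eq_coe_smul (K := ℂ)] at h
    exact h
  have hsa : ∀ y z : EuclideanSpace ℂ (Fin n),
      ⟪Matrix.toEuclideanLin (Aᴴ * A) y, z⟫ = ⟪y, Matrix.toEuclideanLin (Aᴴ * A) z⟫ := by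
    intro y z
    conv_lhs => rw [← hAA.eq]
    rw [Matrix.toEuclideanLin_conjTranspose_eq_adjoint, LinearMap.adjoint_inner_left]
  -- the weights q
  let q : Fin n → ℝ := fun i => ∑ j, ‖⟪u i, v j⟫‖ ^ 2
  have hq0 : ∀ i, 0 ≤ q i := fun i => Finset.sum_nonneg fun j _ => by positivity
  have hq1 : ∀ i, q i ≤ 1 := by
    intro i
    have h := hv.sum_inner_products_le (u i) (s := Finset.univ)
    have huni : ‖u i‖ = 1 := u.orthonormal.1 i
    calc q i = ∑ j, ‖⟪v j, u i⟫‖ ^ 2 :=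
        Finset.sum_congr rfl fun j _ => by rw [norm_inner_symm]
      _ ≤ ‖u i‖ ^ 2 := h
      _ = 1 := by rw [huni]; norm_num
  have hqsum : ∑ i, q i = (k : ℝ) := by
    have h1 : ∑ i, q i = ∑ j, ∑ i, ‖⟪u i, v j⟫‖ ^ 2 := Finset.sum_comm
    have h2 : ∀ j : Fin k, ∑ i, ‖⟪u i, v j⟫‖ ^ 2 = 1 := fun j => by
      rw [parseval_sq u (v j), hv.1 j]; norm_num
    rw [h1, Finset.sum_congr rfl fun j _ => h2 j]
    simp
  -- the kernel property
  have hker : ∀ j, Matrix.toEuclideanLin M (v j) = Matrix.toEuclideanLin A (v j) := by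
    intro j
    have hb : TB (v j) = 0 := (b j).2
    rw [hM, map_sub, LinearMap.sub_apply, ← hTB, hb, sub_zero]
  -- squared norms via eigenvalues
  have hT2 : ∀ j, ‖Matrix.toEuclideanLin M (v j)‖ ^ 2 = ∑ i, lam i * ‖⟪u i, v j⟫‖ ^ 2 := by
    intro j
    have e1 : ((‖Matrix.toEuclideanLin M (v j)‖ ^ 2 : ℝ) : ℂ)
        = ⟪v j, Matrix.toEuclideanLin (Aᴴ * A) (v j)⟫ := by
      rw [inner_toEuclidean_self, ← hker j, inner_self_eq_norm_sq_to_K]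
      norm_cast
    have e2 : ⟪v j, Matrix.toEuclideanLin (Aᴴ * A) (v j)⟫
        = ∑ i, ((lam i : ℝ) : ℂ) * (⟪v j, u i⟫ * ⟪u i, v j⟫) := by
      rw [← u.sum_inner_mul_inner (v j) (Matrix.toEuclideanLin (Aᴴ * A) (v j))]
      refine Finset.sum_congr rfl fun i _ => ?_
      rw [← hsa, huH i, inner_smul_left]
      simp only [Complex.conj_ofReal]
      ring
    have e3 : ((∑ i, lam i * ‖⟪u i, v j⟫‖ ^ 2 : ℝ) : ℂ)
        = ∑ i, ((lam i : ℝ) : ℂ) * (⟪v j, u i⟫ * ⟪u i, v j⟫) := by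
      push_cast
      refine Finset.sum_congr rfl fun i _ => ?_
      rw [← inner_conj_symm (v j) (u i), RCLike.conj_mul]
      push_cast
      norm_num
    exact_mod_cast e1.trans (e2.trans e3.symm)
  -- Bessel bound for the Frobenius norm
  have hT1 : ∑ j, ‖Matrix.toEuclideanLin M (v j)‖ ^ 2 ≤ ∑ i, ∑ l, ‖M i l‖ ^ 2 := by
    have hcoord : ∀ j, ‖Matrix.toEuclideanLin M (v j)‖ ^ 2
        = ∑ i, ‖⟪((WithLp.equiv 2 (Fin n → ℂ)).symm fun l => star (M i l)), v j⟫‖ ^ 2 := by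
      intro j
      rw [EuclideanSpace.norm_eq, Real.sq_sqrt (by positivity)]
      refine Finset.sum_congr rfl fun i _ => ?_
      congr 1
      rw [Matrix.toEuclideanLin_apply]
      simp [PiLp.inner_apply, RCLike.inner_apply, Matrix.mulVec, dotProduct, mul_comm]
    calc ∑ j, ‖Matrix.toEuclideanLin M (v j)‖ ^ 2
        = ∑ j, ∑ i, ‖⟪((WithLp.equiv 2 (Fin n → ℂ)).symm fun l => star (M i l)), v j⟫‖ ^ 2 :=
          Finset.sum_congr rfl fun j _ => hcoord j
      _ = ∑ i, ∑ j, ‖⟪((WithLp.equiv 2 (Fin n → ℂ)).symm fun l => star (M i l)), v j⟫‖ ^ 2 :=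
          Finset.sum_comm
      _ ≤ ∑ i, ∑ l, ‖M i l‖ ^ 2 := by
          refine Finset.sum_le_sum fun i _ => ?_
          have h := hv.sum_inner_products_le
            ((WithLp.equiv 2 (Fin n → ℂ)).symm fun l => star (M i l)) (s := Finset.univ)
          calc ∑ j, ‖⟪((WithLp.equiv 2 (Fin n → ℂ)).symm fun l => star (M i l)), v j⟫‖ ^ 2
              = ∑ j, ‖⟪v j, ((WithLp.equiv 2 (Fin n → ℂ)).symm fun l => star (M i l))⟫‖ ^ 2 :=
                Finset.sum_congr rfl fun j _ => by rw [norm_inner_symm]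
            _ ≤ ‖((WithLp.equiv 2 (Fin n → ℂ)).symm fun l => star (M i l))‖ ^ 2 := h
            _ = ∑ l, ‖M i l‖ ^ 2 := by
                rw [EuclideanSpace.norm_eq, Real.sq_sqrt (by positivity)]
                simp
  -- singular values squared
  have hμeq : ∀ i, σ i ^ 2 = lam (p i) := fun i => by
    rw [hσval i, Real.sq_sqrt (hlam0 (p i))]
  have hσ0 : ∀ i, 0 ≤ σ i := fun i => by rw [hσval i]; exact Real.sqrt_nonneg _
  have hμa : Antitone fun i => lam (p i) := by
    intro i j hij
    simp only
    rw [← hμeq i, ← hμeq j]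
    exact pow_le_pow_left₀ (hσ0 j) (hσanti hij) 2
  calc ∑ i ∈ Finset.univ.filter (fun i : Fin n => r ≤ (i : ℕ)), σ i ^ 2
      = ∑ i ∈ Finset.univ.filter (fun i : Fin n => r ≤ (i : ℕ)), lam (p i) :=
        Finset.sum_congr rfl fun i _ => hμeq i
    _ ≤ ∑ i, lam (p i) * q (p i) :=
        eckart_young_key _ _ hμa (fun i => hlam0 _) (fun i => hq0 _) (fun i => hq1 _)
          (by rw [Equiv.sum_comp p q, hqsum]; exact hk)
    _ = ∑ i, lam i * q i := Equiv.sum_comp p (fun i => lam i * q i)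
    _ = ∑ j, ‖Matrix.toEuclideanLin M (v j)‖ ^ 2 := by
        have h1 : ∑ i, lam i * q i = ∑ i, ∑ j, lam i * ‖⟪u i, v j⟫‖ ^ 2 :=
          Finset.sum_congr rfl fun i _ => Finset.mul_sum _ _ _
        rw [h1, Finset.sum_comm]
        exact Finset.sum_congr rfl fun j _ => (hT2 j).symm
    _ ≤ ∑ i, ∑ l, ‖M i l‖ ^ 2 := hT1
end

section
/- Let (λ_i)_{i≥1} be a nonincreasing sequence of nonnegative reals with ∑_{i≥1} λ_i² = 1. Let Ξ ≥ 1 be an integer and let 3 ≤ D₁ ≤ D₂ ≤ … ≤ D_{Ξ+1} be integers such that λ_i = 0 for all i > D_{Ξ+1}. Let δ₁, …, δ_Ξ be positive reals such that for each μ ∈ {1,…,Ξ}, ∑_{i > D_μ} λ_i² ≤ δ_μ² and δ_μ² ≤ D_{μ+1}/e. Then −∑_{i≥1} λ_i² · log(λ_i²) ≤ log D₁ + ∑_{μ=1}^{Ξ} δ_μ² · log( D_{μ+1} / δ_μ² ), with the convention 0 · log 0 = 0 and log the natural logarithm. -/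
open Real Finset

/-- Gibbs-type bound: entropy of a block is at most `s log |F| + negMulLog s`. -/
lemma gibbs_bound (F : Finset ℕ) (p : ℕ → ℝ) (hp : ∀ i ∈ F, 0 ≤ p i) :
    ∑ i ∈ F, Real.negMulLog (p i) ≤
      (∑ i ∈ F, p i) * Real.log F.card + Real.negMulLog (∑ i ∈ F, p i) := by
  rcases F.eq_empty_or_nonempty with rfl | hF
  · simp
  have hn : (0 : ℝ) < F.card := by exact_mod_cast hF.card_pos
  set n : ℝ := (F.card : ℝ) with hn_def
  set s : ℝ := ∑ i ∈ F, p i with hs_def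
  have jensen := Real.concaveOn_negMulLog.le_map_sum (t := F) (w := fun _ => n⁻¹) (p := p)
    (fun i _ => by positivity)
    (by simp only [Finset.sum_const, nsmul_eq_mul, hn_def]; exact mul_inv_cancel₀ hn.ne')
    (fun i hi => Set.mem_Ici.2 (hp i hi))
  have h1 : ∑ i ∈ F, n⁻¹ • Real.negMulLog (p i) = n⁻¹ * ∑ i ∈ F, Real.negMulLog (p i) := by
    simp [Finset.mul_sum, smul_eq_mul]
  have h2 : ∑ i ∈ F, n⁻¹ • p i = n⁻¹ * s := by
    simp [hs_def, Finset.mul_sum, smul_eq_mul]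
  rw [h1, h2] at jensen
  have h3 : Real.negMulLog (n⁻¹ * s) = s * Real.negMulLog n⁻¹ + n⁻¹ * Real.negMulLog s :=
    Real.negMulLog_mul _ _
  have h4 : Real.negMulLog n⁻¹ = n⁻¹ * Real.log n := by
    simp [Real.negMulLog, Real.log_inv]
  rw [h3, h4] at jensen
  have := mul_le_mul_of_nonneg_left jensen hn.le
  have hne : n ≠ 0 := hn.ne'
  calc ∑ i ∈ F, Real.negMulLog (p i)
      = n * (n⁻¹ * ∑ i ∈ F, Real.negMulLog (p i)) := by field_simp
    _ ≤ n * (s * (n⁻¹ * Real.log n) + n⁻¹ * Real.negMulLog s) := this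
    _ = s * Real.log n + Real.negMulLog s := by field_simp

/-- Monotonicity of `x ↦ x log N + negMulLog x` on `[0, N / e]`. -/
lemma key_mono {N s t : ℝ} (hs : 0 ≤ s) (hst : s ≤ t) (htpos : 0 < t)
    (ht : t ≤ N / Real.exp 1) :
    s * Real.log N + Real.negMulLog s ≤ t * Real.log N + Real.negMulLog t := by
  have hNe : 0 < N / Real.exp 1 := htpos.trans_le ht
  have hN : 0 < N := by
    have h := (le_div_iff₀ (Real.exp_pos 1)).1 ht
    nlinarith [Real.exp_pos 1]
  have hNt : Real.exp 1 ≤ N / t := by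
    rw [le_div_iff₀ htpos]
    calc Real.exp 1 * t = t * Real.exp 1 := by ring
      _ ≤ N := by rwa [← le_div_iff₀ (Real.exp_pos 1)]
  have hlogNt : 1 ≤ Real.log N - Real.log t := by
    have h1 : 1 ≤ Real.log (N / t) := by
      rw [Real.le_log_iff_exp_le (by positivity)]
      exact hNt
    rwa [Real.log_div hN.ne' htpos.ne'] at h1
  rcases eq_or_lt_of_le hs with rfl | hs'
  · simp only [Real.negMulLog_zero, zero_mul, add_zero, zero_add, Real.negMulLog]
    nlinarith
  · have hlog : Real.log t - Real.log s ≤ t / s - 1 := by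
      have h := Real.log_le_sub_one_of_pos (x := t / s) (by positivity)
      rwa [Real.log_div htpos.ne' hs'.ne'] at h
    have h2' : s * (Real.log t - Real.log s) ≤ t - s := by
      have := mul_le_mul_of_nonneg_left hlog hs'.le
      calc s * (Real.log t - Real.log s) ≤ s * (t / s - 1) := this
        _ = t - s := by field_simp
    have h3 : 0 ≤ (t - s) * (Real.log N - Real.log t - 1) :=
      mul_nonneg (by linarith) (by linarith)
    simp only [Real.negMulLog]
    nlinarith

/-- Telescoping block decomposition. -/
lemma sum_blocks (f : ℕ → ℝ) (D : ℕ → ℕ) :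
    ∀ Ξ : ℕ, (∀ μ ν, 1 ≤ μ → μ ≤ ν → ν ≤ Ξ + 1 → D μ ≤ D ν) →
      ∑ μ ∈ Finset.Icc 1 Ξ, ∑ i ∈ Finset.Ico (D μ) (D (μ + 1)), f i
        = ∑ i ∈ Finset.Ico (D 1) (D (Ξ + 1)), f i := by
  intro Ξ
  induction Ξ with
  | zero => intro _; simp
  | succ n ih =>
    intro h
    rw [show Finset.Icc 1 (n + 1) = insert (n + 1) (Finset.Icc 1 n) by
        ext x; simp [Finset.mem_Icc, Finset.mem_insert]; omega,
      Finset.sum_insert (by simp),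
      ih (fun μ ν h1 h2 h3 => h μ ν h1 h2 (by omega)), add_comm,
      Finset.sum_Ico_consecutive]
    · exact h 1 (n + 1) le_rfl (by omega) (by omega)
    · exact h (n + 1) (n + 2) (by omega) (by omega) le_rfl

/-- **Entropy bound from Schmidt-tail estimates.**  Here `a i` denotes the Schmidt coefficient
`λ_{i+1}` (so the sequence is indexed from `0` in Lean, from `1` in the paper; the paper's
condition "`i > D_μ`" becomes "`D μ ≤ i`").  Let `(a i)` be a nonincreasing sequence of
nonnegative reals with `∑ a i ² = 1`, let `Ξ ≥ 1`, let `3 ≤ D 1 ≤ D 2 ≤ … ≤ D (Ξ+1)` be integers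
with `a i = 0` for `i ≥ D (Ξ+1)`, and let `δ 1, …, δ Ξ` be positive reals with
`∑_{i ≥ D μ} a i ² ≤ δ μ ²` and `δ μ ² ≤ D (μ+1) / e` for each `1 ≤ μ ≤ Ξ`.  Then
`−∑ a i ² log (a i ²) ≤ log (D 1) + ∑_{μ=1}^{Ξ} δ μ ² · log (D (μ+1) / δ μ ²)`. -/
theorem entropy_bound_from_tails
    (a : ℕ → ℝ) (ha0 : ∀ i, 0 ≤ a i) (hmono : Antitone a)
    (hnorm : ∑' i, a i ^ 2 = 1)
    (Ξ : ℕ) (hΞ : 1 ≤ Ξ) (D : ℕ → ℕ) (hD3 : 3 ≤ D 1)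
    (hDmono : ∀ μ ν, 1 ≤ μ → μ ≤ ν → ν ≤ Ξ + 1 → D μ ≤ D ν)
    (hvanish : ∀ i, D (Ξ + 1) ≤ i → a i = 0)
    (δ : ℕ → ℝ) (hδpos : ∀ μ, 1 ≤ μ → μ ≤ Ξ → 0 < δ μ)
    (htail : ∀ μ, 1 ≤ μ → μ ≤ Ξ → ∑' i : {i : ℕ // D μ ≤ i}, a (i : ℕ) ^ 2 ≤ δ μ ^ 2)
    (hδD : ∀ μ, 1 ≤ μ → μ ≤ Ξ → δ μ ^ 2 ≤ (D (μ + 1) : ℝ) / Real.exp 1) :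
    -∑' i, a i ^ 2 * Real.log (a i ^ 2) ≤
      Real.log (D 1) + ∑ μ ∈ Finset.Icc 1 Ξ, δ μ ^ 2 * Real.log ((D (μ + 1) : ℝ) / δ μ ^ 2) := by
  set N := D (Ξ + 1) with hN_def
  have hp0 : ∀ i, (0 : ℝ) ≤ a i ^ 2 := fun i => sq_nonneg _
  have hpz : ∀ i ∉ Finset.range N, a i ^ 2 = 0 := by
    intro i hi
    rw [hvanish i (by simpa using hi)]; ring
  have hsum1 : ∑ i ∈ Finset.range N, a i ^ 2 = 1 := by
    rw [← hnorm]; exact (tsum_eq_sum hpz).symm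
  have hD1N : D 1 ≤ N := hDmono 1 (Ξ + 1) le_rfl (by omega) le_rfl
  have hE : -∑' i, a i ^ 2 * Real.log (a i ^ 2)
      = ∑ i ∈ Finset.range N, Real.negMulLog (a i ^ 2) := by
    rw [tsum_eq_sum (s := Finset.range N) (fun i hi => by rw [hpz i hi]; simp),
      ← Finset.sum_neg_distrib]
    exact Finset.sum_congr rfl fun i _ => by simp [Real.negMulLog]
  have hsplit : ∑ i ∈ Finset.range N, Real.negMulLog (a i ^ 2)
      = ∑ i ∈ Finset.range (D 1), Real.negMulLog (a i ^ 2)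
        + ∑ μ ∈ Finset.Icc 1 Ξ, ∑ i ∈ Finset.Ico (D μ) (D (μ + 1)),
            Real.negMulLog (a i ^ 2) := by
    rw [sum_blocks _ D Ξ hDmono, Finset.range_eq_Ico, Finset.range_eq_Ico,
      Finset.sum_Ico_consecutive _ (Nat.zero_le _) hD1N]
  -- Block 0 bound
  have hexp3 : Real.exp 1 ≤ 3 := by
    have := Real.exp_one_lt_d9
    linarith
  have hb0 : ∑ i ∈ Finset.range (D 1), Real.negMulLog (a i ^ 2) ≤ Real.log (D 1) := by
    set s0 := ∑ i ∈ Finset.range (D 1), a i ^ 2 with hs0_def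
    have hs0nn : 0 ≤ s0 := Finset.sum_nonneg fun i _ => hp0 i
    have hs0le1 : s0 ≤ 1 := by
      rw [← hsum1]
      exact Finset.sum_le_sum_of_subset_of_nonneg
        (Finset.range_subset_range.2 hD1N) fun i _ _ => hp0 i
    have hD1e : (1 : ℝ) ≤ (D 1 : ℝ) / Real.exp 1 := by
      rw [le_div_iff₀ (Real.exp_pos 1)]
      have : (3 : ℝ) ≤ (D 1 : ℝ) := by exact_mod_cast hD3
      linarith
    calc ∑ i ∈ Finset.range (D 1), Real.negMulLog (a i ^ 2)
        ≤ s0 * Real.log ((Finset.range (D 1)).card) + Real.negMulLog s0 :=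
          gibbs_bound _ _ fun i _ => hp0 i
      _ = s0 * Real.log (D 1) + Real.negMulLog s0 := by rw [Finset.card_range]
      _ ≤ 1 * Real.log (D 1) + Real.negMulLog 1 := key_mono hs0nn hs0le1 one_pos hD1e
      _ = Real.log (D 1) := by simp
  -- blocks μ bound
  have hblocks : ∀ μ ∈ Finset.Icc 1 Ξ,
      ∑ i ∈ Finset.Ico (D μ) (D (μ + 1)), Real.negMulLog (a i ^ 2)
        ≤ δ μ ^ 2 * Real.log ((D (μ + 1) : ℝ) / δ μ ^ 2) := by
    intro μ hμ
    rw [Finset.mem_Icc] at hμ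
    obtain ⟨hμ1, hμΞ⟩ := hμ
    have hδp : 0 < δ μ := hδpos μ hμ1 hμΞ
    have hδ2 : 0 < δ μ ^ 2 := by positivity
    have hDμN : D (μ + 1) ≤ N := hDmono (μ + 1) (Ξ + 1) (by omega) (by omega) le_rfl
    have hD3μ : 3 ≤ D (μ + 1) := le_trans hD3 (hDmono 1 (μ + 1) le_rfl (by omega) (by omega))
    have hDμ1pos : 0 < (D (μ + 1) : ℝ) := by exact_mod_cast by omega
    set sμ := ∑ i ∈ Finset.Ico (D μ) (D (μ + 1)), a i ^ 2 with hsμ_def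
    have hsμnn : 0 ≤ sμ := Finset.sum_nonneg fun i _ => hp0 i
    -- tail bound
    have htsub : (∑' i : {i : ℕ // D μ ≤ i}, a (i : ℕ) ^ 2)
        = ∑ i ∈ Finset.Ico (D μ) N, a i ^ 2 := by
      have h0 : (∑' i : {i : ℕ // D μ ≤ i}, a (i : ℕ) ^ 2)
          = ∑' i, Set.indicator {i : ℕ | D μ ≤ i} (fun i => a i ^ 2) i :=
        tsum_subtype {i : ℕ | D μ ≤ i} (fun i => a i ^ 2)
      rw [h0, tsum_eq_sum (s := Finset.Ico (D μ) N)]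
      · refine Finset.sum_congr rfl fun i hi => ?_
        rw [Finset.mem_Ico] at hi
        exact Set.indicator_of_mem (show i ∈ {j : ℕ | D μ ≤ j} from hi.1) _
      · intro i hi
        rw [Finset.mem_Ico] at hi
        push_neg at hi
        by_cases h : D μ ≤ i
        · rw [Set.indicator_of_mem (show i ∈ {j : ℕ | D μ ≤ j} from h)]
          exact hpz i (by simp [Finset.mem_range]; omega)
        · exact Set.indicator_of_notMem (show i ∉ {j : ℕ | D μ ≤ j} from h) _
    have hsμδ : sμ ≤ δ μ ^ 2 := by
      have h1 : sμ ≤ ∑ i ∈ Finset.Ico (D μ) N, a i ^ 2 :=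
        Finset.sum_le_sum_of_subset_of_nonneg
          (Finset.Ico_subset_Ico_right hDμN) fun i _ _ => hp0 i
      have h2 := htail μ hμ1 hμΞ
      rw [htsub] at h2
      linarith
    have hcardle : Real.log ((Finset.Ico (D μ) (D (μ + 1))).card)
        ≤ Real.log (D (μ + 1)) := by
      rcases Nat.eq_zero_or_pos (Finset.Ico (D μ) (D (μ + 1))).card with h | h
      · rw [h]
        simp only [Nat.cast_zero, Real.log_zero]
        apply Real.log_nonneg
        exact_mod_cast (by omega : 1 ≤ D (μ + 1))
      · apply Real.log_le_log (by exact_mod_cast h)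
        have : (Finset.Ico (D μ) (D (μ + 1))).card ≤ D (μ + 1) := by
          rw [Nat.card_Ico]; omega
        exact_mod_cast this
    calc ∑ i ∈ Finset.Ico (D μ) (D (μ + 1)), Real.negMulLog (a i ^ 2)
        ≤ sμ * Real.log ((Finset.Ico (D μ) (D (μ + 1))).card) + Real.negMulLog sμ :=
          gibbs_bound _ _ fun i _ => hp0 i
      _ ≤ sμ * Real.log (D (μ + 1)) + Real.negMulLog sμ := by
          have := mul_le_mul_of_nonneg_left hcardle hsμnn
          linarith
      _ ≤ δ μ ^ 2 * Real.log (D (μ + 1)) + Real.negMulLog (δ μ ^ 2) :=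
          key_mono hsμnn hsμδ hδ2 (hδD μ hμ1 hμΞ)
      _ = δ μ ^ 2 * Real.log ((D (μ + 1) : ℝ) / δ μ ^ 2) := by
          rw [Real.log_div hDμ1pos.ne' hδ2.ne', Real.negMulLog]
          ring
  rw [hE, hsplit]
  exact add_le_add hb0 (Finset.sum_le_sum hblocks)
end
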